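/- arXiv:1510.02213 — 3 statements merged into one kernel-verified Lean document; each statement's English description precedes it below -/
import Mathlib

section
/- For s = 0 and s = 1, the sum over n ≥ 0 of q^(n² + sn)/(q;q)_n equals the product over all n ≥ 1 with n ≡ ±(s+1) mod 5 of 1/(1-q^n) (the Rogers-Ramanujan identities), as an identity of formal power series in q. -/
/-!
Both sides are `X`-adic limits of finite identities. The polynomials
`∑_{a + k = n} q^(k² + sk) [a, k]_q` tend to the left-hand side; they satisfy the recurrence
`c (n + 2) = c (n + 1) + q^(n + 1 + s) c n`, and so do Schur's alternating sums
`∑_j (-1)^j q^(j(5j + 2s + 1)/2) [n + s, ⌊(n - 5j)/2⌋]_q`, because consecutive terms already do in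
pairs. Schur's sums tend to `θ_s / (q;q)_∞`, where `θ_s = ∑_{j ∈ ℤ} (-1)^j q^(j(5j + 2s + 1)/2)`.
The finite Jacobi triple product in base `q^5`, applied to `[2n, n + j]_{q^5}`, gives
`θ_s = (q^(3+s); q^5)_∞ (q^(2-s); q^5)_∞ (q^5; q^5)_∞`, and dividing by
`(q;q)_∞ = ∏_{r=1}^{5} (q^r; q^5)_∞` leaves `1 / ((q^(1+s); q^5)_∞ (q^(4-s); q^5)_∞)`.
The finite identities are proved in the fraction field of `ℚ⟦X⟧`, where Gaussian binomials are
honest quotients.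
-/

noncomputable instance : TopologicalSpace (PowerSeries ℚ) :=
  TopologicalSpace.induced (fun f (n : ℕ) => (PowerSeries.coeff (R := ℚ) n) f) inferInstance

/-- the formal variable `q` -/
noncomputable def q : PowerSeries ℚ := PowerSeries.X

/-- the finite Pochhammer symbol `(q;q)_n` -/
noncomputable def poch (n : ℕ) : PowerSeries ℚ :=
  ∏ i ∈ Finset.range n, (1 - q ^ (i + 1))

open Finset Filter Topology PowerSeries
open scoped Ring

local notation:50 a " ≡ " b " [X^" N "]" => SModEq (Ideal.span {PowerSeries.X ^ N}) a b

noncomputable section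

lemma neg_one_pow_natAbs_add {R : Type*} [Ring R] (a b : ℤ) :
    (-1 : R) ^ (a + b).natAbs = (-1) ^ a.natAbs * (-1) ^ b.natAbs := by
  simp only [← Int.coe_negOnePow, Int.negOnePow_add]
  push_cast
  rfl

lemma two_mul_choose_two (m : ℕ) : 2 * (m.choose 2 : ℤ) = m * (m - 1) := by
  induction m with
  | zero => simp
  | succ m ih =>
    rw [Nat.choose_succ_succ', Nat.choose_one_right]
    push_cast
    linarith

lemma prod_range_mul_eq_prod_prod {M : Type*} [CommMonoid M] (f : ℕ → M) (m n : ℕ) :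
    ∏ i ∈ range (m * n), f i = ∏ i ∈ range n, ∏ r ∈ range m, f (m * i + r) := by
  induction n with
  | zero => simp
  | succ n ih => rw [mul_add_one, prod_range_add, ih, prod_range_succ]

lemma map_ringInverse {M N F : Type*} [MonoidWithZero M] [MonoidWithZero N] [FunLike F M N]
    [MonoidHomClass F M N] (f : F) {a : M} (ha : IsUnit a) : f a⁻¹ʳ = (f a)⁻¹ʳ := by
  obtain ⟨u, rfl⟩ := ha
  rw [Ring.inverse_unit, show f u = (Units.map (f : M →* N) u : N) from rfl, Ring.inverse_unit,
    ← map_inv]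
  rfl

lemma mul_inverse_mul_mul_eq {A : Type*} [CommRing A] {t b c p : A} (hb : IsUnit b)
    (hp : IsUnit p) (h : t * p⁻¹ʳ = b) :
    t * (b * c * p)⁻¹ʳ = c⁻¹ʳ := by
  have ht : t = b * p := by rw [← h, mul_assoc, Ring.inverse_mul_cancel p hp, mul_one]
  rw [ht, Ring.mul_inverse_rev, Ring.mul_inverse_rev]
  linear_combination (c⁻¹ʳ * p * p⁻¹ʳ) * Ring.mul_inverse_cancel b hb +
    c⁻¹ʳ * Ring.mul_inverse_cancel p hp

section QPochhammer

variable {R S : Type*} [CommRing R] [CommRing S]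

def qPochhammer (a x : R) (n : ℕ) : R := ∏ i ∈ range n, (1 - a * x ^ i)

lemma qPochhammer_zero (a x : R) : qPochhammer a x 0 = 1 := prod_range_zero _

lemma qPochhammer_succ (a x : R) (n : ℕ) :
    qPochhammer a x (n + 1) = qPochhammer a x n * (1 - a * x ^ n) :=
  prod_range_succ _ _

lemma map_qPochhammer (f : R →+* S) (a x : R) (n : ℕ) :
    f (qPochhammer a x n) = qPochhammer (f a) (f x) n := by
  simp [qPochhammer, map_prod]

lemma qPochhammer_mul (x : R) (m M : ℕ) :
    qPochhammer x x (m * M) = ∏ r ∈ range m, qPochhammer (x ^ (r + 1)) (x ^ m) M := by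
  rw [qPochhammer, prod_range_mul_eq_prod_prod, Finset.prod_comm]
  exact prod_congr rfl fun r _ => prod_congr rfl fun i _ => by ring

/-- `[n, k]_x`; writing it with `Ring.inverse` makes it meaningful in `ℚ⟦X⟧` as well as in
fields. -/
def qBinom (x : R) (n : ℕ) (k : ℤ) : R :=
  if 0 ≤ k ∧ k ≤ n then
    qPochhammer x x n * (qPochhammer x x k.toNat * qPochhammer x x (n - k.toNat))⁻¹ʳ
  else 0

lemma qBinom_of_neg (x : R) (n : ℕ) {k : ℤ} (hk : k < 0) : qBinom x n k = 0 :=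
  if_neg (by omega)

lemma qBinom_of_lt (x : R) {n : ℕ} {k : ℤ} (hk : n < k) : qBinom x n k = 0 :=
  if_neg (by omega)

lemma qBinom_natCast (x : R) {n k : ℕ} (hk : k ≤ n) :
    qBinom x n k = qPochhammer x x n * (qPochhammer x x k * qPochhammer x x (n - k))⁻¹ʳ := by
  simp [qBinom, hk]

lemma qBinom_symm (x : R) (n : ℕ) (k : ℤ) : qBinom x n (n - k) = qBinom x n k := by
  unfold qBinom
  by_cases hk : 0 ≤ k ∧ k ≤ n
  · rw [if_pos (by omega), if_pos hk, show ((n : ℤ) - k).toNat = n - k.toNat by omega,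
      show n - (n - k.toNat) = k.toNat by omega, mul_comm (qPochhammer x x (n - k.toNat))]
  · rw [if_neg (by omega), if_neg hk]

lemma map_qBinom (f : R →+* S) {x : R} (hx : ∀ n, IsUnit (qPochhammer x x n)) (n : ℕ) (k : ℤ) :
    f (qBinom x n k) = qBinom (f x) n k := by
  unfold qBinom
  split_ifs
  · rw [map_mul, map_ringInverse f ((hx _).mul (hx _)), map_mul, map_qPochhammer,
      map_qPochhammer, map_qPochhammer]
  · exact map_zero f

end QPochhammer

section GaussianBinomial

variable {F : Type*} [Field F] {x : F}

lemma qPochhammer_self_ne_zero (hx : ∀ n : ℕ, x ^ (n + 1) ≠ 1) (n : ℕ) :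
    qPochhammer x x n ≠ 0 :=
  prod_ne_zero_iff.2 fun i _ => sub_ne_zero.2 fun h => hx i (by rw [pow_succ']; exact h.symm)

lemma qBinom_eq_div {n k : ℕ} (hk : k ≤ n) :
    qBinom x n k = qPochhammer x x n / (qPochhammer x x k * qPochhammer x x (n - k)) := by
  rw [qBinom_natCast x hk, Ring.inverse_eq_inv', div_eq_mul_inv]

lemma qBinom_zero_right (hx : ∀ n : ℕ, x ^ (n + 1) ≠ 1) (n : ℕ) : qBinom x n 0 = 1 := by
  simpa [qPochhammer_zero, div_self (qPochhammer_self_ne_zero hx n)] using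
    qBinom_eq_div (x := x) n.zero_le

lemma qBinom_self (hx : ∀ n : ℕ, x ^ (n + 1) ≠ 1) (n : ℕ) : qBinom x n n = 1 := by
  calc qBinom x n n = qBinom x n (n - 0) := by rw [sub_zero]
    _ = 1 := by rw [qBinom_symm, qBinom_zero_right hx]

theorem qBinom_succ (hx : ∀ n : ℕ, x ^ (n + 1) ≠ 1) (n : ℕ) (k : ℤ) :
    qBinom x (n + 1) k = qBinom x n k + x ^ ((n : ℤ) + 1 - k) * qBinom x n (k - 1) := by
  rcases lt_or_ge k 1 with hk | hk
  · rcases lt_or_ge k 0 with hk' | hk'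
    · simp [qBinom_of_neg, hk', show k - 1 < 0 by omega]
    · obtain rfl : k = 0 := by omega
      simp [qBinom_zero_right hx, qBinom_of_neg]
  rcases lt_or_ge (n : ℤ) k with hkn | hkn
  · rcases eq_or_lt_of_le (show (n : ℤ) + 1 ≤ k by omega) with rfl | hkn'
    · have h := qBinom_self hx (n + 1)
      push_cast at h
      simp [qBinom_of_lt, qBinom_self hx, h]
    · simp [qBinom_of_lt, hkn, hkn', show (n : ℤ) < k - 1 by omega]
  obtain ⟨b, c, rfl, rfl⟩ : ∃ b c : ℕ, k = b + 1 ∧ n = b + 1 + c :=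
    ⟨k.toNat - 1, n - k.toNat, by omega, by omega⟩
  have e1 : qBinom x (b + 1 + c + 1) ((b : ℤ) + 1) =
      qPochhammer x x (b + 1 + c + 1) / (qPochhammer x x (b + 1) * qPochhammer x x (c + 1)) := by
    have h := qBinom_eq_div (x := x) (show b + 1 ≤ b + 1 + c + 1 by omega)
    rwa [show b + 1 + c + 1 - (b + 1) = c + 1 by omega, Nat.cast_succ] at h
  have e2 : qBinom x (b + 1 + c) ((b : ℤ) + 1) =
      qPochhammer x x (b + 1 + c) / (qPochhammer x x (b + 1) * qPochhammer x x c) := by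
    have h := qBinom_eq_div (x := x) (show b + 1 ≤ b + 1 + c by omega)
    rwa [show b + 1 + c - (b + 1) = c by omega, Nat.cast_succ] at h
  have e3 : qBinom x (b + 1 + c) ((b : ℤ) + 1 - 1) =
      qPochhammer x x (b + 1 + c) / (qPochhammer x x b * qPochhammer x x (c + 1)) := by
    rw [add_sub_cancel_right, qBinom_eq_div (by omega), show b + 1 + c - b = c + 1 by omega]
  have hexp : x ^ ((b : ℤ) + 1 + c + 1 - ((b : ℤ) + 1)) = x ^ (c + 1) := by
    rw [← zpow_natCast]
    congr 1
    push_cast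
    ring
  have hb := qPochhammer_self_ne_zero hx b
  have hc := qPochhammer_self_ne_zero hx c
  have hb' : 1 - x * x ^ b ≠ 0 := sub_ne_zero.2 fun h => hx b (by rw [pow_succ']; exact h.symm)
  have hc' : 1 - x * x ^ c ≠ 0 := sub_ne_zero.2 fun h => hx c (by rw [pow_succ']; exact h.symm)
  push_cast
  rw [e1, e2, e3, hexp]
  simp only [qPochhammer_succ, show b + 1 + c = b + c + 1 by ring]
  field_simp
  ring

theorem qBinom_succ' (hx : ∀ n : ℕ, x ^ (n + 1) ≠ 1) (n : ℕ) (k : ℤ) :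
    qBinom x (n + 1) k = x ^ k * qBinom x n k + qBinom x n (k - 1) := by
  rw [← qBinom_symm, qBinom_succ hx, ← qBinom_symm x n k, ← qBinom_symm x n (k - 1)]
  push_cast
  ring_nf

/-- Gauss's `q`-binomial theorem. -/
theorem qPochhammer_neg_eq_sum (hx0 : x ≠ 0) (hx : ∀ n : ℕ, x ^ (n + 1) ≠ 1) (z : F) (m : ℕ) :
    qPochhammer (-z) x m = ∑ k ∈ range (m + 1), x ^ k.choose 2 * z ^ k * qBinom x m k := by
  induction m with
  | zero => simp [qPochhammer_zero, qBinom_zero_right hx]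
  | succ m ih =>
    simp only [qBinom_succ hx, mul_add, sum_add_distrib]
    rw [sum_range_succ _ (m + 1), qBinom_of_lt x (by push_cast; omega), mul_zero, add_zero,
      sum_range_succ' (fun k : ℕ => x ^ k.choose 2 * z ^ k *
        (x ^ ((m : ℤ) + 1 - k) * qBinom x m (k - 1))), qPochhammer_succ, ih]
    have shift : ∀ k : ℕ, x ^ (k + 1).choose 2 * z ^ (k + 1) *
        (x ^ ((m : ℤ) + 1 - (k + 1 : ℕ)) * qBinom x m ((k + 1 : ℕ) - 1)) =
        z * x ^ m * (x ^ k.choose 2 * z ^ k * qBinom x m k) := by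
      intro k
      have hexp : x ^ (k + 1).choose 2 * x ^ ((m : ℤ) + 1 - (k + 1 : ℕ)) =
          x ^ k.choose 2 * x ^ m := by
        simp only [← zpow_natCast, ← zpow_add₀ hx0, Nat.choose_succ_succ', Nat.choose_one_right]
        push_cast
        ring_nf
      rw [show ((k + 1 : ℕ) : ℤ) - 1 = k by push_cast; ring]
      linear_combination (z ^ (k + 1) * qBinom x m k) * hexp
    simp only [shift, ← mul_sum, Nat.cast_zero, zero_sub,
      qBinom_of_neg x m (show (-1 : ℤ) < 0 by norm_num), mul_zero, add_zero]
    ring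

lemma qPochhammer_mul_zpow_neg_two_mul (hx0 : x ≠ 0) {z : F} (hz : z ≠ 0) (n : ℕ) :
    qPochhammer (z * x ^ (-(n : ℤ))) x (2 * n) =
      (-z) ^ n * (x ^ (n + 1).choose 2)⁻¹ * (qPochhammer z x n * qPochhammer (x / z) x n) := by
  have upper : ∏ i ∈ range n, (1 - z * x ^ (-(n : ℤ)) * x ^ (n + i)) = qPochhammer z x n := by
    refine prod_congr rfl fun i _ => ?_
    rw [mul_assoc, ← zpow_natCast x (n + i), ← zpow_add₀ hx0, ← zpow_natCast x i]
    push_cast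
    ring_nf
  have lower : ∀ i ∈ range n, 1 - z * x ^ (-(n : ℤ)) * x ^ (n - 1 - i) =
      (-z * (x ^ (i + 1))⁻¹) * (1 - x / z * x ^ i) := by
    intro i hi
    have h : x ^ (-(n : ℤ)) * x ^ (n - 1 - i) * x ^ (i + 1) = 1 := by
      rw [mem_range] at hi
      rw [← zpow_natCast, ← zpow_add₀ hx0, ← zpow_natCast, ← zpow_add₀ hx0,
        show -(n : ℤ) + ((n - 1 - i : ℕ) : ℤ) + ((i + 1 : ℕ) : ℤ) = 0 by omega, zpow_zero]
    rw [mul_assoc z, eq_inv_of_mul_eq_one_left h]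
    field_simp
    ring
  have hsum : ∑ i ∈ range n, (i + 1) = (n + 1).choose 2 := by
    rw [Nat.choose_two_right, ← sum_range_id, sum_range_succ', add_zero]
  rw [qPochhammer, two_mul, prod_range_add, ← prod_range_reflect, prod_congr rfl lower, upper,
    prod_mul_distrib, prod_mul_distrib, prod_const, card_range, prod_inv_distrib,
    prod_pow_eq_pow_sum, hsum]
  simp only [qPochhammer]
  ring

lemma pow_choose_two_mul_neg_pow (hx0 : x ≠ 0) {z : F} (hz : z ≠ 0) {n k : ℕ} {j : ℤ}
    (hk : (k : ℤ) = n + j) :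
    x ^ k.choose 2 * (-(z * x ^ (-(n : ℤ)))) ^ k =
      (-z) ^ n * (x ^ (n + 1).choose 2)⁻¹ * ((-1) ^ j.natAbs * x ^ (j * (j - 1) / 2) * z ^ j) := by
  have hsign : (-1 : F) ^ k = (-1) ^ n * (-1) ^ j.natAbs := by
    rw [show k = ((n : ℤ) + j).natAbs by omega, neg_one_pow_natAbs_add, Int.natAbs_natCast]
  have hzk : z ^ k = z ^ n * z ^ j := by
    rw [← zpow_natCast, ← zpow_natCast z n, ← zpow_add₀ hz, hk]
  have hxk : x ^ k.choose 2 * (x ^ (-(n : ℤ))) ^ k =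
      (x ^ (n + 1).choose 2)⁻¹ * x ^ (j * (j - 1) / 2) := by
    rw [← zpow_natCast, ← zpow_natCast (x ^ _), ← zpow_mul, ← zpow_natCast x ((n + 1).choose 2),
      ← zpow_neg, ← zpow_add₀ hx0, ← zpow_add₀ hx0]
    congr 1
    rw [hk]
    have hk2 := two_mul_choose_two k
    rw [hk] at hk2
    have hn2 := two_mul_choose_two (n + 1)
    have hj2 := Int.two_mul_ediv_two_of_even (Int.even_mul_pred_self j)
    push_cast at hn2
    linarith
  rw [neg_pow, mul_pow, hsign, hzk, neg_pow z n]
  linear_combination ((-1) ^ n * (-1) ^ j.natAbs * z ^ n * z ^ j) * hxk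

theorem jacobi_triple_product_finite (hx0 : x ≠ 0) (hx : ∀ n : ℕ, x ^ (n + 1) ≠ 1) {z : F}
    (hz : z ≠ 0) (n : ℕ) :
    ∑ j ∈ Icc (-(n : ℤ)) n,
        (-1) ^ j.natAbs * x ^ (j * (j - 1) / 2) * z ^ j * qBinom x (2 * n) (n + j) =
      qPochhammer z x n * qPochhammer (x / z) x n := by
  have gauss := qPochhammer_neg_eq_sum hx0 hx (-(z * x ^ (-(n : ℤ)))) (2 * n)
  rw [neg_neg, qPochhammer_mul_zpow_neg_two_mul hx0 hz] at gauss
  have hc : (-z) ^ n * (x ^ (n + 1).choose 2)⁻¹ ≠ 0 :=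
    mul_ne_zero (pow_ne_zero _ (neg_ne_zero.2 hz)) (inv_ne_zero (pow_ne_zero _ hx0))
  refine (mul_left_cancel₀ hc (gauss.trans ?_)).symm
  rw [mul_sum]
  refine sum_nbij' (fun k => (k : ℤ) - n) (fun j => (j + n).toNat)
    (fun k hk => by simp only [mem_range, mem_Icc] at hk ⊢; omega)
    (fun j hj => by simp only [mem_range, mem_Icc] at hj ⊢; omega) (fun k _ => by omega)
    (fun j hj => by simp only [mem_Icc] at hj; omega) ?_
  intro k _
  rw [pow_choose_two_mul_neg_pow hx0 hz (show (k : ℤ) = n + (k - n) by ring),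
    show (n : ℤ) + (k - n) = k by ring]
  ring

end GaussianBinomial

section RogersRamanujanPolynomials

variable {R S : Type*} [CommRing R] [CommRing S]

def rrExponent (s : ℕ) (j : ℤ) : ℤ := j * (5 * j + 2 * s + 1) / 2

/-- For `s ≤ 1` the exponent is nonnegative (`natAbs_le_rrExponent`), so `toNat` loses
nothing. -/
def rrTheta (s : ℕ) (x : R) (j : ℤ) : R := (-1) ^ j.natAbs * x ^ (rrExponent s j).toNat

def rrPoly (s : ℕ) (x : R) (n : ℕ) : R :=
  ∑ p ∈ antidiagonal n, x ^ (p.2 ^ 2 + s * p.2) * qBinom x p.1 p.2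

def schurTerm (s : ℕ) (x : R) (n : ℕ) (j : ℤ) : R :=
  rrTheta s x j * qBinom x (n + s) ((n - 5 * j) / 2)

def schurSum (s : ℕ) (x : R) (n : ℕ) : R := ∑ j ∈ Icc (-(n : ℤ) - 1) (n + 1), schurTerm s x n j

lemma two_mul_rrExponent (s : ℕ) (j : ℤ) : 2 * rrExponent s j = j * (5 * j + 2 * s + 1) := by
  refine Int.two_mul_ediv_two_of_even ?_
  rw [show j * (5 * j + 2 * s + 1) = j * (j + 1) + 2 * (2 * j ^ 2 + s * j) by ring]
  exact (Int.even_mul_succ_self j).add (even_two_mul _)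

lemma rrExponent_succ (s : ℕ) (j : ℤ) :
    rrExponent s (j + 1) = rrExponent s j + 5 * j + 3 + s := by
  have h₀ := two_mul_rrExponent s j
  have h₁ := two_mul_rrExponent s (j + 1)
  linarith

lemma natAbs_le_rrExponent {s : ℕ} (hs : s ≤ 1) (j : ℤ) : (j.natAbs : ℤ) ≤ rrExponent s j := by
  have h := two_mul_rrExponent s j
  rcases le_or_gt 0 j with hj | hj
  · rw [Int.natAbs_of_nonneg hj]
    nlinarith [Int.le_self_sq j]
  · rw [Int.ofNat_natAbs_of_nonpos hj.le]
    have : (s : ℤ) ≤ 1 := by exact_mod_cast hs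
    nlinarith

lemma rrTheta_zero (s : ℕ) (x : R) : rrTheta s x 0 = 1 := by simp [rrTheta, rrExponent]

lemma schurTerm_eq_zero (s : ℕ) (x : R) (n : ℕ) {j : ℤ}
    (h : ((n : ℤ) - 5 * j) / 2 < 0 ∨ ((n + s : ℕ) : ℤ) < ((n : ℤ) - 5 * j) / 2) :
    schurTerm s x n j = 0 := by
  rcases h with h | h
  · rw [schurTerm, qBinom_of_neg _ _ h, mul_zero]
  · rw [schurTerm, qBinom_of_lt _ h, mul_zero]

lemma schurSum_eq_sum_of_subset {s : ℕ} (hs : s ≤ 1) (x : R) (n : ℕ) {W : Finset ℤ}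
    (hW : Icc (-(n : ℤ) - 1) (n + 1) ⊆ W) : schurSum s x n = ∑ j ∈ W, schurTerm s x n j := by
  refine sum_subset hW fun j _ hj => schurTerm_eq_zero s x n ?_
  rw [mem_Icc] at hj
  push_cast
  omega

lemma map_rrTheta (f : R →+* S) (s : ℕ) (x : R) (j : ℤ) :
    f (rrTheta s x j) = rrTheta s (f x) j := by
  simp [rrTheta]

lemma map_rrPoly (f : R →+* S) {x : R} (hx : ∀ n, IsUnit (qPochhammer x x n)) (s n : ℕ) :
    f (rrPoly s x n) = rrPoly s (f x) n := by
  simp [rrPoly, map_qBinom f hx]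

lemma map_schurSum (f : R →+* S) {x : R} (hx : ∀ n, IsUnit (qPochhammer x x n)) (s n : ℕ) :
    f (schurSum s x n) = schurSum s (f x) n := by
  simp [schurSum, schurTerm, map_qBinom f hx, map_rrTheta]

end RogersRamanujanPolynomials

section Schur

variable {F : Type*} [Field F] {x : F}

lemma rrTheta_eq_zpow {s : ℕ} (hs : s ≤ 1) (j : ℤ) :
    rrTheta s x j = (-1) ^ j.natAbs * x ^ rrExponent s j := by
  rw [rrTheta, ← zpow_natCast x,
    Int.toNat_of_nonneg ((Int.natCast_nonneg _).trans (natAbs_le_rrExponent hs j))]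

lemma schurSum_zero {s : ℕ} (hs : s ≤ 1) (hx : ∀ n : ℕ, x ^ (n + 1) ≠ 1) :
    schurSum s x 0 = 1 := by
  rw [schurSum, sum_eq_single 0]
  · simp [schurTerm, rrTheta_zero, qBinom_zero_right hx]
  · intro j _ hj
    refine schurTerm_eq_zero s x 0 ?_
    push_cast
    omega
  · simp

lemma schurSum_one {s : ℕ} (hs : s ≤ 1) (hx : ∀ n : ℕ, x ^ (n + 1) ≠ 1) :
    schurSum s x 1 = 1 := by
  rw [schurSum, sum_eq_single 0]
  · simp [schurTerm, rrTheta_zero, qBinom_zero_right hx]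
  · intro j _ hj
    refine schurTerm_eq_zero s x 1 ?_
    push_cast
    omega
  · simp

lemma rrPoly_zero (s : ℕ) (hx : ∀ n : ℕ, x ^ (n + 1) ≠ 1) : rrPoly s x 0 = 1 := by
  simp [rrPoly, qBinom_zero_right hx]

lemma rrPoly_one (s : ℕ) (hx : ∀ n : ℕ, x ^ (n + 1) ≠ 1) : rrPoly s x 1 = 1 := by
  simp [rrPoly, Nat.antidiagonal_succ, qBinom_zero_right hx, qBinom_of_lt]

/-- The identity between Gaussian binomials behind Schur's recurrence. -/
lemma qBinom_schur (hx0 : x ≠ 0) (hx : ∀ n : ℕ, x ^ (n + 1) ≠ 1) (N : ℕ) (k e : ℤ) :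
    x ^ e * (qBinom x (N + 2) k - qBinom x (N + 1) k) -
        x ^ (e + N + 4 - 2 * k) * (qBinom x (N + 2) (k - 2) - qBinom x (N + 1) (k - 3)) =
      x ^ (N + 1) *
        (x ^ e * qBinom x N (k - 1) - x ^ (e + N + 4 - 2 * k) * qBinom x N (k - 3)) := by
  have p1 : qBinom x (N + 2) k =
      qBinom x (N + 1) k + x ^ ((N : ℤ) + 2 - k) * qBinom x (N + 1) (k - 1) := by
    rw [qBinom_succ hx]
    push_cast
    ring_nf
  have p2 : qBinom x (N + 2) (k - 2) =
      x ^ (k - 2) * qBinom x (N + 1) (k - 2) + qBinom x (N + 1) (k - 3) := by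
    rw [qBinom_succ' hx]
    ring_nf
  have p3 : qBinom x (N + 1) (k - 1) = x ^ (k - 1) * qBinom x N (k - 1) + qBinom x N (k - 2) := by
    rw [qBinom_succ' hx]
    ring_nf
  have p4 : qBinom x (N + 1) (k - 2) =
      qBinom x N (k - 2) + x ^ ((N : ℤ) + 3 - k) * qBinom x N (k - 3) := by
    rw [qBinom_succ hx]
    ring_nf
  have f1 : x ^ e * x ^ ((N : ℤ) + 2 - k) = x ^ (e + N + 2 - k) := by
    rw [← zpow_add₀ hx0]
    ring_nf
  have f2 : x ^ (e + N + 4 - 2 * k) * x ^ (k - 2) = x ^ (e + N + 2 - k) := by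
    rw [← zpow_add₀ hx0]
    ring_nf
  have f3 : x ^ (e + N + 2 - k) * x ^ (k - 1) = x ^ (N + 1) * x ^ e := by
    rw [← zpow_add₀ hx0, ← zpow_natCast, ← zpow_add₀ hx0]
    push_cast
    ring_nf
  have f4 : x ^ (e + N + 2 - k) * x ^ ((N : ℤ) + 3 - k) =
      x ^ (N + 1) * x ^ (e + N + 4 - 2 * k) := by
    rw [← zpow_add₀ hx0, ← zpow_natCast, ← zpow_add₀ hx0]
    push_cast
    ring_nf
  linear_combination x ^ e * p1 - x ^ (e + N + 4 - 2 * k) * p2 + qBinom x (N + 1) (k - 1) * f1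
    - qBinom x (N + 1) (k - 2) * f2 + x ^ (e + N + 2 - k) * (p3 - p4)
    + qBinom x N (k - 1) * f3 - qBinom x N (k - 3) * f4

/-- The terms `j` and `j + 1` of Schur's sum, for `n + j` odd, already satisfy the
recurrence of `rrPoly`. -/
lemma schurTerm_pair (hx0 : x ≠ 0) (hx : ∀ n : ℕ, x ^ (n + 1) ≠ 1) {s : ℕ} (hs : s ≤ 1)
    (n : ℕ) {j : ℤ} (hj : Odd ((n : ℤ) + j)) :
    (schurTerm s x (n + 2) j - schurTerm s x (n + 1) j) +
        (schurTerm s x (n + 2) (j + 1) - schurTerm s x (n + 1) (j + 1)) =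
      x ^ (n + 1 + s) * (schurTerm s x n j + schurTerm s x n (j + 1)) := by
  obtain ⟨k, hk⟩ : ∃ k : ℤ, (n : ℤ) + 2 - 5 * j = 2 * k + 1 := by
    obtain ⟨m, hm⟩ := hj
    exact ⟨m - 3 * j + 1, by omega⟩
  have hE : rrExponent s (j + 1) = rrExponent s j + (n + s : ℕ) + 4 - 2 * k := by
    rw [rrExponent_succ]
    push_cast
    omega
  have hsign : (-1 : F) ^ (j + 1).natAbs = -(-1) ^ j.natAbs := by
    rw [neg_one_pow_natAbs_add]
    simp
  simp only [schurTerm, rrTheta_eq_zpow hs, hsign, hE]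
  rw [show n + 2 + s = n + s + 2 by omega, show n + 1 + s = n + s + 1 by omega,
    show ((n + 2 : ℕ) - 5 * j) / 2 = k by push_cast; omega,
    show ((n + 1 : ℕ) - 5 * j) / 2 = k by push_cast; omega,
    show ((n + 2 : ℕ) - 5 * (j + 1)) / 2 = k - 2 by push_cast; omega,
    show ((n + 1 : ℕ) - 5 * (j + 1)) / 2 = k - 3 by push_cast; omega,
    show ((n : ℤ) - 5 * j) / 2 = k - 1 by omega,
    show ((n : ℤ) - 5 * (j + 1)) / 2 = k - 3 by omega]
  linear_combination (-1) ^ j.natAbs * qBinom_schur hx0 hx (n + s) k (rrExponent s j)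

lemma schurSum_add_two (hx0 : x ≠ 0) (hx : ∀ n : ℕ, x ^ (n + 1) ≠ 1) {s : ℕ} (hs : s ≤ 1)
    (n : ℕ) : schurSum s x (n + 2) = schurSum s x (n + 1) + x ^ (n + 1 + s) * schurSum s x n := by
  set W := Icc (-(n : ℤ) - 3) (n + 4)
  have hW : ∀ m ≤ n + 2, Icc (-(m : ℤ) - 1) (m + 1) ⊆ W := fun m hm j hj => by
    simp only [W, mem_Icc] at hj ⊢
    omega
  rw [schurSum_eq_sum_of_subset hs x _ (hW _ le_rfl),
    schurSum_eq_sum_of_subset hs x _ (hW _ (by omega)),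
    schurSum_eq_sum_of_subset hs x _ (hW _ (by omega)), mul_sum, ← sub_eq_zero, sub_add_eq_sub_sub,
    ← sum_sub_distrib, ← sum_sub_distrib]
  refine sum_involution (fun j _ => if Odd ((n : ℤ) + j) then j + 1 else j - 1) ?_ ?_ ?_ ?_
  · intro j _
    split_ifs with hj
    · linear_combination schurTerm_pair hx0 hx hs n hj
    · have hj' : Odd ((n : ℤ) + (j - 1)) := by
        rw [Int.not_odd_iff_even] at hj
        obtain ⟨m, hm⟩ := hj
        exact ⟨m - 1, by omega⟩
      have h := schurTerm_pair hx0 hx hs n hj'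
      rw [sub_add_cancel] at h
      linear_combination h
  · intro j _ _
    split_ifs <;> omega
  · intro j hj
    simp only [W, mem_Icc, Int.odd_iff] at hj ⊢
    split_ifs <;> omega
  · intro j _
    simp only [Int.odd_iff]
    split_ifs <;> omega

lemma rrPoly_add_two (hx0 : x ≠ 0) (hx : ∀ n : ℕ, x ^ (n + 1) ≠ 1) (s n : ℕ) :
    rrPoly s x (n + 2) = rrPoly s x (n + 1) + x ^ (n + 1 + s) * rrPoly s x n := by
  have shift : ∀ p ∈ antidiagonal n, x ^ ((p.2 + 1) ^ 2 + s * (p.2 + 1)) *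
      (x ^ ((p.1 : ℤ) + 1 - (p.2 + 1 : ℕ)) * qBinom x p.1 ((p.2 + 1 : ℕ) - 1)) =
      x ^ (n + 1 + s) * (x ^ (p.2 ^ 2 + s * p.2) * qBinom x p.1 p.2) := by
    rintro ⟨a, k⟩ h
    rw [HasAntidiagonal.mem_antidiagonal] at h
    have hexp : x ^ ((k + 1) ^ 2 + s * (k + 1)) * x ^ ((a : ℤ) + 1 - (k + 1 : ℕ)) =
        x ^ (n + 1 + s) * x ^ (k ^ 2 + s * k) := by
      simp only [← zpow_natCast, ← zpow_add₀ hx0]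
      congr 1
      subst h
      push_cast
      ring
    rw [show ((k + 1 : ℕ) : ℤ) - 1 = k by push_cast; ring]
    linear_combination qBinom x a k * hexp
  rw [rrPoly, rrPoly, rrPoly, Nat.sum_antidiagonal_succ]
  simp only [qBinom_succ hx, mul_add, sum_add_distrib]
  rw [Nat.sum_antidiagonal_succ' (f := fun p => x ^ (p.2 ^ 2 + s * p.2) *
    (x ^ ((p.1 : ℤ) + 1 - p.2) * qBinom x p.1 (p.2 - 1))), sum_congr rfl shift, ← mul_sum]
  simp [qBinom_of_neg, qBinom_of_lt x (show ((0 : ℕ) : ℤ) < n + 1 + 1 by omega)]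

theorem rrPoly_eq_schurSum (hx0 : x ≠ 0) (hx : ∀ n : ℕ, x ^ (n + 1) ≠ 1) {s : ℕ} (hs : s ≤ 1)
    (n : ℕ) : rrPoly s x n = schurSum s x n := by
  induction n using Nat.twoStepInduction with
  | zero => rw [rrPoly_zero s hx, schurSum_zero hs hx]
  | one => rw [rrPoly_one s hx, schurSum_one hs hx]
  | more n ih₀ ih₁ => rw [rrPoly_add_two hx0 hx, schurSum_add_two hx0 hx hs, ih₀, ih₁]

lemma jacobi_rrTheta {t : F} (ht0 : t ≠ 0) (ht : ∀ n : ℕ, t ^ (n + 1) ≠ 1)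
    {s : ℕ} (hs : s ≤ 1) (n : ℕ) :
    ∑ j ∈ Icc (-(n : ℤ)) n, rrTheta s t j * qBinom (t ^ 5) (2 * n) (n + j) =
      qPochhammer (t ^ (3 + s)) (t ^ 5) n * qPochhammer (t ^ (2 - s)) (t ^ 5) n := by
  have h5 : ∀ n : ℕ, (t ^ 5) ^ (n + 1) ≠ 1 := fun n => by
    rw [← pow_mul]
    exact ht (5 * n + 4)
  have hdiv : t ^ 5 / t ^ (3 + s) = t ^ (2 - s) := by
    rw [div_eq_iff (pow_ne_zero _ ht0), ← pow_add]
    congr 1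
    omega
  rw [← hdiv, ← jacobi_triple_product_finite (pow_ne_zero 5 ht0) h5 (pow_ne_zero _ ht0)]
  refine sum_congr rfl fun j _ => ?_
  have hexp : t ^ rrExponent s j = (t ^ 5) ^ (j * (j - 1) / 2) * (t ^ (3 + s)) ^ j := by
    rw [← zpow_natCast t 5, ← zpow_natCast t (3 + s), ← zpow_mul, ← zpow_mul, ← zpow_add₀ ht0]
    congr 1
    have hJ := Int.two_mul_ediv_two_of_even (Int.even_mul_pred_self j)
    have hE := two_mul_rrExponent s j
    push_cast
    linarith
  rw [rrTheta_eq_zpow hs, hexp]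
  ring

end Schur

section SModEq

variable {A : Type*} [CommRing A] {I : Ideal A} {ι : Type*}

lemma SModEq.ringInverse {a b : A} (ha : IsUnit a) (hb : IsUnit b) (h : a ≡ b [SMOD I]) :
    a⁻¹ʳ ≡ b⁻¹ʳ [SMOD I] := by
  rw [SModEq.sub_mem] at h ⊢
  have key : a⁻¹ʳ - b⁻¹ʳ = -(a⁻¹ʳ * b⁻¹ʳ) * (a - b) := by
    linear_combination b⁻¹ʳ * Ring.inverse_mul_cancel a ha - a⁻¹ʳ * Ring.inverse_mul_cancel b hb
  rw [key]
  exact I.mul_mem_left _ h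

lemma smodEq_zero_mul {a : A} (h : a ≡ 0 [SMOD I]) (b : A) : a * b ≡ 0 [SMOD I] := by
  simpa using h.mul (SModEq.refl b)

lemma sum_smodEq_of_subset {f : ι → A} {S T : Finset ι} (hTS : T ⊆ S)
    (h : ∀ i ∈ S, i ∉ T → f i ≡ 0 [SMOD I]) : ∑ i ∈ S, f i ≡ ∑ i ∈ T, f i [SMOD I] := by
  classical
  rw [← sum_sdiff hTS]
  simpa using (SModEq.sum fun i hi => h i (mem_sdiff.1 hi).1 (mem_sdiff.1 hi).2).add
    (SModEq.refl (∑ i ∈ T, f i))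

lemma prod_smodEq_of_subset {u : ι → A} {S T : Finset ι} (hTS : T ⊆ S)
    (h : ∀ i ∈ S, i ∉ T → u i ≡ 1 [SMOD I]) : ∏ i ∈ S, u i ≡ ∏ i ∈ T, u i [SMOD I] := by
  classical
  rw [← prod_sdiff hTS]
  simpa using (SModEq.prod fun i hi => h i (mem_sdiff.1 hi).1 (mem_sdiff.1 hi).2).mul
    (SModEq.refl (∏ i ∈ T, u i))

end SModEq

section XAdic

variable {R : Type*} [CommRing R] {ι κ α : Type*}

lemma smodEq_X_pow_iff {N : ℕ} {f g : R⟦X⟧} :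
    f ≡ g [X^N] ↔ ∀ n < N, coeff n f = coeff n g := by
  simp only [SModEq.sub_mem, Ideal.mem_span_singleton, X_pow_dvd_iff, map_sub, sub_eq_zero]

lemma IsUnit.of_smodEq {f g : R⟦X⟧} (hg : IsUnit g) (h : f ≡ g [X^1]) : IsUnit f := by
  rw [isUnit_iff_constantCoeff, ← coeff_zero_eq_constantCoeff_apply,
    smodEq_X_pow_iff.1 h 0 one_pos, coeff_zero_eq_constantCoeff_apply, ← isUnit_iff_constantCoeff]
  exact hg

lemma inv_eq_ringInverse {k : Type*} [Field k] (f : k⟦X⟧) : f⁻¹ = f⁻¹ʳ := by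
  by_cases hf : constantCoeff f = 0
  · rw [PowerSeries.inv_eq_zero.2 hf, Ring.inverse_non_unit]
    rw [isUnit_iff_constantCoeff, hf]
    exact not_isUnit_zero
  · have hu : IsUnit f := isUnit_iff_constantCoeff.2 (isUnit_iff_ne_zero.2 hf)
    rw [← one_mul f⁻¹, ← Ring.inverse_mul_cancel f hu, mul_assoc, PowerSeries.mul_inv_cancel f hf,
      mul_one]

def XAdicTendsto (F : ι → R⟦X⟧) (l : Filter ι) (g : R⟦X⟧) : Prop :=
  ∀ N, ∀ᶠ i in l, F i ≡ g [X^N]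

namespace XAdicTendsto

variable {F G : ι → R⟦X⟧} {l : Filter ι} {f g : R⟦X⟧}

lemma const (l : Filter ι) (g : R⟦X⟧) : XAdicTendsto (fun _ => g) l g :=
  fun _ => Eventually.of_forall fun _ => SModEq.rfl

lemma comp (h : XAdicTendsto F l g) {l' : Filter α} {φ : α → ι} (hφ : Tendsto φ l' l) :
    XAdicTendsto (F ∘ φ) l' g :=
  fun N => hφ.eventually (h N)

lemma congr' (h : XAdicTendsto F l g) (hFG : F =ᶠ[l] G) : XAdicTendsto G l g :=
  fun N => ((h N).and hFG).mono fun _ hi => hi.2 ▸ hi.1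

lemma mul (hF : XAdicTendsto F l f) (hG : XAdicTendsto G l g) :
    XAdicTendsto (fun i => F i * G i) l (f * g) :=
  fun N => ((hF N).and (hG N)).mono fun _ hi => hi.1.mul hi.2

lemma finset_prod {F : κ → ι → R⟦X⟧} {g : κ → R⟦X⟧} (s : Finset κ)
    (h : ∀ r ∈ s, XAdicTendsto (F r) l (g r)) :
    XAdicTendsto (fun i => ∏ r ∈ s, F r i) l (∏ r ∈ s, g r) :=
  fun N => (s.eventually_all.2 fun r hr => h r hr N).mono fun _ hi => SModEq.prod hi

lemma ringInverse (h : XAdicTendsto F l g) (hg : IsUnit g) :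
    XAdicTendsto (fun i => (F i)⁻¹ʳ) l g⁻¹ʳ :=
  fun N => ((h N).and (h 1)).mono fun _ hi => hi.1.ringInverse (hg.of_smodEq hi.2) hg

lemma eq [l.NeBot] (hf : XAdicTendsto F l f) (hg : XAdicTendsto F l g) : f = g := by
  ext n
  obtain ⟨i, hfi, hgi⟩ := ((hf (n + 1)).and (hg (n + 1))).exists
  rw [← smodEq_X_pow_iff.1 hfi n n.lt_succ_self, smodEq_X_pow_iff.1 hgi n n.lt_succ_self]

lemma isUnit [l.NeBot] (h : XAdicTendsto F l g) (hF : ∀ i, IsUnit (F i)) : IsUnit g := by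
  obtain ⟨i, hi⟩ := (h 1).exists
  exact (hF i).of_smodEq hi.symm

end XAdicTendsto

lemma exists_xadicTendsto {F : ι → R⟦X⟧} {l : Filter ι} (h : ∀ N, ∃ c, ∀ᶠ i in l, F i ≡ c [X^N]) :
    ∃ g, XAdicTendsto F l g := by
  choose c hc using h
  refine ⟨mk fun n => coeff n (c (n + 1)), fun N => ?_⟩
  filter_upwards [(range N).eventually_all.2 fun n _ => hc (n + 1)] with i hi
  refine smodEq_X_pow_iff.2 fun n hn => ?_
  rw [coeff_mk, smodEq_X_pow_iff.1 (hi n (mem_range.2 hn)) n n.lt_succ_self]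

lemma exists_xadicTendsto_sum {f : ι → R⟦X⟧} (hf : XAdicTendsto f cofinite 0) :
    ∃ g, XAdicTendsto (fun S : Finset ι => ∑ i ∈ S, f i) atTop g := by
  refine exists_xadicTendsto fun N => ?_
  obtain ⟨T, hT⟩ : ∃ T : Finset ι, ∀ i ∉ T, f i ≡ 0 [X^N] :=
    ⟨(eventually_cofinite.1 (hf N)).toFinset, fun i hi => by simpa using hi⟩
  exact ⟨∑ i ∈ T, f i, (eventually_ge_atTop T).mono fun S hS =>
    sum_smodEq_of_subset hS fun i _ hi => hT i hi⟩

lemma exists_xadicTendsto_prod {u : ι → R⟦X⟧} (hu : XAdicTendsto u cofinite 1) :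
    ∃ g, XAdicTendsto (fun S : Finset ι => ∏ i ∈ S, u i) atTop g := by
  refine exists_xadicTendsto fun N => ?_
  obtain ⟨T, hT⟩ : ∃ T : Finset ι, ∀ i ∉ T, u i ≡ 1 [X^N] :=
    ⟨(eventually_cofinite.1 (hu N)).toFinset, fun i hi => by simpa using hi⟩
  exact ⟨∏ i ∈ T, u i, (eventually_ge_atTop T).mono fun S hS =>
    prod_smodEq_of_subset hS fun i _ hi => hT i hi⟩

end XAdic

section Topology

variable {ι α : Type*}

instance : T2Space ℚ⟦X⟧ :=
  Topology.IsEmbedding.t2Space (f := fun f (n : ℕ) => coeff n f)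
    ⟨⟨rfl⟩, fun _ _ h => PowerSeries.ext fun n => congrFun h n⟩

lemma XAdicTendsto.tendsto {F : ι → ℚ⟦X⟧} {l : Filter ι} {g : ℚ⟦X⟧} (h : XAdicTendsto F l g) :
    Tendsto F l (𝓝 g) := by
  have hind : Topology.IsInducing fun f : ℚ⟦X⟧ => fun n : ℕ => coeff n f := ⟨rfl⟩
  rw [hind.tendsto_nhds_iff, tendsto_pi_nhds]
  exact fun n => tendsto_const_nhds.congr'
    ((h (n + 1)).mono fun i hi => (smodEq_X_pow_iff.1 hi n n.lt_succ_self).symm)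

lemma xadicTendsto_tsum {f : ι → ℚ⟦X⟧} (hf : XAdicTendsto f cofinite 0) :
    XAdicTendsto (fun S : Finset ι => ∑ i ∈ S, f i) atTop (∑' i, f i) := by
  obtain ⟨g, hg⟩ := exists_xadicTendsto_sum hf
  rwa [(show HasSum f g from hg.tendsto).tsum_eq]

lemma xadicTendsto_tprod {u : ι → ℚ⟦X⟧} (hu : XAdicTendsto u cofinite 1) :
    XAdicTendsto (fun S : Finset ι => ∏ i ∈ S, u i) atTop (∏' i, u i) := by
  obtain ⟨g, hg⟩ := exists_xadicTendsto_prod hu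
  rwa [(show HasProd u g from hg.tendsto).tprod_eq]

lemma tsum_smodEq_sum {f : ι → ℚ⟦X⟧} (hf : XAdicTendsto f cofinite 0) {N : ℕ} {T : Finset ι}
    (hT : ∀ i ∉ T, f i ≡ 0 [X^N]) : ∑' i, f i ≡ ∑ i ∈ T, f i [X^N] := by
  obtain ⟨S, hS, hTS⟩ := ((xadicTendsto_tsum hf N).and (eventually_ge_atTop T)).exists
  exact hS.symm.trans (sum_smodEq_of_subset hTS fun i _ hi => hT i hi)

/-- Tannery's theorem for the `X`-adic topology. -/
theorem xadicTendsto_tsum_of_tendsto {a : α → ι → ℚ⟦X⟧} {b : ι → ℚ⟦X⟧} {l : Filter α} [l.NeBot]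
    {B : ℚ⟦X⟧} (hab : ∀ i, XAdicTendsto (a · i) l (b i))
    (hunif : ∀ N, ∀ᶠ i in cofinite, ∀ n, a n i ≡ 0 [X^N])
    (hb : XAdicTendsto (fun S : Finset ι => ∑ i ∈ S, b i) atTop B) :
    XAdicTendsto (fun n => ∑' i, a n i) l B := by
  intro N
  obtain ⟨T, hT⟩ : ∃ T : Finset ι, ∀ i ∉ T, ∀ n, a n i ≡ 0 [X^N] :=
    ⟨(eventually_cofinite.1 (hunif N)).toFinset, fun i hi => by simpa using hi⟩
  have hbT : ∀ i ∉ T, b i ≡ 0 [X^N] := fun i hi => by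
    obtain ⟨n, hn⟩ := (hab i N).exists
    exact hn.symm.trans (hT i hi n)
  obtain ⟨S, hS, hTS⟩ := ((hb N).and (eventually_ge_atTop T)).exists
  filter_upwards [T.eventually_all.2 fun i _ => hab i N] with n hn
  have h₁ : ∑' i, a n i ≡ ∑ i ∈ T, a n i [X^N] :=
    tsum_smodEq_sum (fun M => (hunif M).mono fun i hi => hi n) fun i hi => hT i hi n
  have h₂ : ∑ i ∈ T, a n i ≡ ∑ i ∈ T, b i [X^N] := SModEq.sum hn
  have h₃ : ∑ i ∈ S, b i ≡ ∑ i ∈ T, b i [X^N] := sum_smodEq_of_subset hTS fun i _ hi => hbT i hi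
  exact h₁.trans (h₂.trans (h₃.symm.trans hS))

end Topology

section QPochhammerLimits

variable {R : Type*} [CommRing R] {α : Type*}

lemma constantCoeff_qPochhammer {a : R⟦X⟧} (ha : constantCoeff a = 0) (x : R⟦X⟧) (n : ℕ) :
    constantCoeff (qPochhammer a x n) = 1 := by
  simp [qPochhammer, map_prod, ha]

lemma isUnit_qPochhammer {a : R⟦X⟧} (ha : constantCoeff a = 0) (x : R⟦X⟧) (n : ℕ) :
    IsUnit (qPochhammer a x n) := by
  rw [isUnit_iff_constantCoeff, constantCoeff_qPochhammer ha]
  exact isUnit_one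

lemma xadicTendsto_one_sub_mul_pow (a : R⟦X⟧) {x : R⟦X⟧} (hx : constantCoeff x = 0) :
    XAdicTendsto (fun i => 1 - a * x ^ i) cofinite 1 := by
  intro N
  obtain ⟨y, rfl⟩ := X_dvd_iff.2 hx
  rw [Nat.cofinite_eq_atTop]
  filter_upwards [eventually_ge_atTop N] with i hi
  rw [SModEq.sub_mem, Ideal.mem_span_singleton, sub_sub_cancel_left, dvd_neg, mul_pow]
  exact ((pow_dvd_pow X hi).mul_right _).mul_left a

lemma xadicTendsto_qBinom_const {x : R⟦X⟧} (hx : constantCoeff x = 0) {P : R⟦X⟧}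
    (hP : XAdicTendsto (qPochhammer x x) atTop P) (k : ℕ) :
    XAdicTendsto (fun m => qBinom x m k) atTop (qPochhammer x x k)⁻¹ʳ := by
  have hPu : IsUnit P := hP.isUnit (isUnit_qPochhammer hx x)
  have h := hP.mul (((XAdicTendsto.const atTop (qPochhammer x x k)).mul
    (hP.comp (tendsto_sub_atTop_nat k))).ringInverse ((isUnit_qPochhammer hx x k).mul hPu))
  rw [Ring.mul_inverse_rev, ← mul_assoc, Ring.mul_inverse_cancel P hPu, one_mul] at h
  exact h.congr' ((eventually_ge_atTop k).mono fun m hm => (qBinom_natCast x hm).symm)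

lemma xadicTendsto_qBinom {x : R⟦X⟧} (hx : constantCoeff x = 0) {P : R⟦X⟧}
    (hP : XAdicTendsto (qPochhammer x x) atTop P) {l : Filter α} {m : α → ℕ} {k : α → ℤ}
    (hk : Tendsto k l atTop) (hmk : Tendsto (fun i => (m i : ℤ) - k i) l atTop) :
    XAdicTendsto (fun i => qBinom x (m i) (k i)) l P⁻¹ʳ := by
  have hPu : IsUnit P := hP.isUnit (isUnit_qPochhammer hx x)
  have hk0 := hk.eventually_ge_atTop 0
  have hmk0 := hmk.eventually_ge_atTop 0
  have hk' : Tendsto (fun i => (k i).toNat) l atTop := tendsto_atTop.2 fun b =>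
    (hk.eventually_ge_atTop b).mono fun i hi => by omega
  have hmk' : Tendsto (fun i => m i - (k i).toNat) l atTop := tendsto_atTop.2 fun b =>
    ((hmk.eventually_ge_atTop b).and hk0).mono fun i hi => by omega
  have hm : Tendsto m l atTop := tendsto_atTop.2 fun b =>
    ((hmk.eventually_ge_atTop b).and hk0).mono fun i hi => by omega
  have h := (hP.comp hm).mul (((hP.comp hk').mul (hP.comp hmk')).ringInverse (hPu.mul hPu))
  rw [Ring.mul_inverse_rev, ← mul_assoc, Ring.mul_inverse_cancel P hPu, one_mul] at h
  refine h.congr' ((hk0.and hmk0).mono fun i hi => ?_)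
  simp only [Function.comp, qBinom, if_pos (show 0 ≤ k i ∧ k i ≤ m i by omega)]

end QPochhammerLimits

section QPochhammerInf

def qPochhammerInf (a x : ℚ⟦X⟧) : ℚ⟦X⟧ := ∏' i, (1 - a * x ^ i)

variable {a x : ℚ⟦X⟧}

lemma xadicTendsto_qPochhammer (a : ℚ⟦X⟧) (hx : constantCoeff x = 0) :
    XAdicTendsto (qPochhammer a x) atTop (qPochhammerInf a x) :=
  (xadicTendsto_tprod (xadicTendsto_one_sub_mul_pow a hx)).comp tendsto_finset_range

lemma isUnit_qPochhammerInf (ha : constantCoeff a = 0) (hx : constantCoeff x = 0) :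
    IsUnit (qPochhammerInf a x) :=
  (xadicTendsto_qPochhammer a hx).isUnit (isUnit_qPochhammer ha x)

end QPochhammerInf

section Transfer

lemma constantCoeff_q : constantCoeff q = 0 := by simp [q]

lemma constantCoeff_q_pow {m : ℕ} (hm : m ≠ 0) : constantCoeff (q ^ m) = 0 := by
  simp [q, hm]

lemma isUnit_qPochhammer_q_pow {m : ℕ} (hm : m ≠ 0) (n : ℕ) :
    IsUnit (qPochhammer (q ^ m) (q ^ m) n) :=
  isUnit_qPochhammer (constantCoeff_q_pow hm) _ n

lemma algebraMap_q_ne_zero : algebraMap ℚ⟦X⟧ (FractionRing ℚ⟦X⟧) q ≠ 0 :=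
  (map_ne_zero_iff _ (IsFractionRing.injective _ _)).2 X_ne_zero

lemma algebraMap_q_pow_ne_one (n : ℕ) : algebraMap ℚ⟦X⟧ (FractionRing ℚ⟦X⟧) q ^ (n + 1) ≠ 1 := by
  rw [← map_pow, ← map_one (algebraMap ℚ⟦X⟧ (FractionRing ℚ⟦X⟧)),
    (IsFractionRing.injective _ _).ne_iff]
  intro h
  simpa [q] using congrArg constantCoeff h

theorem rrPoly_eq_schurSum_q {s : ℕ} (hs : s ≤ 1) (n : ℕ) : rrPoly s q n = schurSum s q n := by
  have hu := isUnit_qPochhammer_q_pow one_ne_zero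
  simp only [pow_one] at hu
  apply IsFractionRing.injective ℚ⟦X⟧ (FractionRing ℚ⟦X⟧)
  rw [map_rrPoly _ hu, map_schurSum _ hu]
  exact rrPoly_eq_schurSum algebraMap_q_ne_zero algebraMap_q_pow_ne_one hs n

theorem jacobi_rrTheta_q {s : ℕ} (hs : s ≤ 1) (n : ℕ) :
    ∑ j ∈ Icc (-(n : ℤ)) n, rrTheta s q j * qBinom (q ^ 5) (2 * n) (n + j) =
      qPochhammer (q ^ (3 + s)) (q ^ 5) n * qPochhammer (q ^ (2 - s)) (q ^ 5) n := by
  apply IsFractionRing.injective ℚ⟦X⟧ (FractionRing ℚ⟦X⟧)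
  simp only [map_sum, map_mul, map_rrTheta,
    map_qBinom _ (isUnit_qPochhammer_q_pow (m := 5) (by norm_num)),
    map_qPochhammer, map_pow]
  exact jacobi_rrTheta algebraMap_q_ne_zero algebraMap_q_pow_ne_one hs n

end Transfer

section RogersRamanujan

variable {s : ℕ}

lemma poch_eq_qPochhammer (n : ℕ) : poch n = qPochhammer q q n :=
  prod_congr rfl fun i _ => by rw [pow_succ']

lemma q_pow_smodEq_zero {N m : ℕ} (h : N ≤ m) : q ^ m ≡ 0 [X^N] := by
  rw [SModEq.zero, Ideal.mem_span_singleton]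
  exact pow_dvd_pow X h

lemma xadicTendsto_rrTheta (hs : s ≤ 1) : XAdicTendsto (rrTheta s q) cofinite 0 := by
  intro N
  rw [eventually_cofinite]
  refine (Set.finite_Icc (-(N : ℤ)) N).subset fun j hj => ?_
  by_contra hjN
  apply hj
  have h1 := natAbs_le_rrExponent hs j
  rw [Set.mem_Icc] at hjN
  rw [rrTheta, mul_comm]
  exact smodEq_zero_mul (q_pow_smodEq_zero (by omega)) _

def thetaSeries (s : ℕ) : ℚ⟦X⟧ := ∑' j : ℤ, rrTheta s q j

lemma xadicTendsto_sum_rrTheta_mul (hs : s ≤ 1) (c : ℚ⟦X⟧) :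
    XAdicTendsto (fun S : Finset ℤ => ∑ j ∈ S, rrTheta s q j * c) atTop (thetaSeries s * c) := by
  simpa only [sum_mul, thetaSeries] using
    (xadicTendsto_tsum (xadicTendsto_rrTheta hs)).mul (XAdicTendsto.const atTop c)

lemma rrPoly_eq_tsum (s : ℕ) (x : ℚ⟦X⟧) (n : ℕ) :
    rrPoly s x n = ∑' k : ℕ, x ^ (k ^ 2 + s * k) * qBinom x (n - k) k := by
  rw [tsum_eq_sum (s := range (n + 1)) fun k hk => ?_]
  · rw [rrPoly, ← Nat.sum_antidiagonal_swap]
    simp only [Prod.fst_swap, Prod.snd_swap]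
    rw [Nat.sum_antidiagonal_eq_sum_range_succ (fun k a => x ^ (k ^ 2 + s * k) * qBinom x a k)]
  · rw [mem_range] at hk
    rw [qBinom_of_lt x (by omega), mul_zero]

lemma schurSum_eq_tsum (hs : s ≤ 1) (n : ℕ) :
    schurSum s q n = ∑' j : ℤ, schurTerm s q n j := by
  rw [schurSum, tsum_eq_sum fun j hj => schurTerm_eq_zero s q n ?_]
  rw [mem_Icc] at hj
  push_cast
  omega

lemma xadicTendsto_rrPoly_tsum (s : ℕ) :
    XAdicTendsto (rrPoly s q) atTop (∑' k : ℕ, q ^ (k ^ 2 + s * k) * (poch k)⁻¹) := by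
  have htail : ∀ N, ∀ᶠ k in cofinite, ∀ c : ℚ⟦X⟧, q ^ (k ^ 2 + s * k) * c ≡ 0 [X^N] := by
    intro N
    rw [Nat.cofinite_eq_atTop]
    filter_upwards [eventually_ge_atTop N] with k hk c
    exact smodEq_zero_mul (q_pow_smodEq_zero (by nlinarith)) c
  refine XAdicTendsto.congr' ?_ (Eventually.of_forall fun n => (rrPoly_eq_tsum s q n).symm)
  refine xadicTendsto_tsum_of_tendsto (fun k => ?_) (fun N => (htail N).mono fun k hk n => hk _)
    (xadicTendsto_tsum fun N => (htail N).mono fun k hk => hk _)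
  rw [poch_eq_qPochhammer, inv_eq_ringInverse]
  exact (XAdicTendsto.const _ _).mul ((xadicTendsto_qBinom_const constantCoeff_q
    (xadicTendsto_qPochhammer q constantCoeff_q) k).comp (tendsto_sub_atTop_nat k))

lemma xadicTendsto_rrPoly_thetaSeries (hs : s ≤ 1) :
    XAdicTendsto (rrPoly s q) atTop (thetaSeries s * (qPochhammerInf q q)⁻¹ʳ) := by
  refine XAdicTendsto.congr' ?_ (Eventually.of_forall fun n =>
    ((rrPoly_eq_schurSum_q hs n).trans (schurSum_eq_tsum hs n)).symm)
  refine xadicTendsto_tsum_of_tendsto (fun j => ?_)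
    (fun N => (xadicTendsto_rrTheta hs N).mono fun j hj n => smodEq_zero_mul hj _)
    (xadicTendsto_sum_rrTheta_mul hs _)
  refine (XAdicTendsto.const _ _).mul
    (xadicTendsto_qBinom constantCoeff_q (xadicTendsto_qPochhammer q constantCoeff_q) ?_ ?_)
  · exact tendsto_atTop.2 fun b =>
      (eventually_ge_atTop (2 * b + 5 * j).toNat).mono fun n hn => by omega
  · exact tendsto_atTop.2 fun b =>
      (eventually_ge_atTop (2 * b - 5 * j).toNat).mono fun n hn => by push_cast; omega

theorem tsum_eq_thetaSeries_mul (hs : s ≤ 1) :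
    ∑' k : ℕ, q ^ (k ^ 2 + s * k) * (poch k)⁻¹ = thetaSeries s * (qPochhammerInf q q)⁻¹ʳ :=
  (xadicTendsto_rrPoly_tsum s).eq (xadicTendsto_rrPoly_thetaSeries hs)

lemma tendsto_five_mul_atTop : Tendsto (fun M : ℕ => 5 * M) atTop atTop :=
  tendsto_atTop_mono (fun M => Nat.le_mul_of_pos_left M (by norm_num)) tendsto_id

theorem thetaSeries_mul_inverse (hs : s ≤ 1) :
    thetaSeries s * (qPochhammerInf (q ^ 5) (q ^ 5))⁻¹ʳ =
      qPochhammerInf (q ^ (3 + s)) (q ^ 5) * qPochhammerInf (q ^ (2 - s)) (q ^ 5) := by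
  have h5 := constantCoeff_q_pow (m := 5) (by norm_num)
  have hP := xadicTendsto_qPochhammer (q ^ 5) h5
  let G : ℕ → ℚ⟦X⟧ := fun n =>
    ∑ j ∈ Icc (-(n : ℤ)) n, rrTheta s q j * qBinom (q ^ 5) (2 * n) (n + j)
  have hG : ∀ n, G n = ∑' j : ℤ, rrTheta s q j * qBinom (q ^ 5) (2 * n) (n + j) := fun n => by
    refine (tsum_eq_sum fun j hj => ?_).symm
    rw [mem_Icc] at hj
    rcases not_and_or.1 hj with hj | hj
    · rw [qBinom_of_neg _ _ (by omega), mul_zero]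
    · rw [qBinom_of_lt _ (by push_cast; omega), mul_zero]
  have h₁ : XAdicTendsto G atTop (thetaSeries s * (qPochhammerInf (q ^ 5) (q ^ 5))⁻¹ʳ) := by
    refine XAdicTendsto.congr' ?_ (Eventually.of_forall fun n => (hG n).symm)
    refine xadicTendsto_tsum_of_tendsto (fun j => ?_)
      (fun N => (xadicTendsto_rrTheta hs N).mono fun j hj n => smodEq_zero_mul hj _)
      (xadicTendsto_sum_rrTheta_mul hs _)
    refine (XAdicTendsto.const _ _).mul (xadicTendsto_qBinom h5 hP ?_ ?_)
    · exact tendsto_atTop.2 fun b => (eventually_ge_atTop (b - j).toNat).mono fun n hn => by omega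
    · exact tendsto_atTop.2 fun b => (eventually_ge_atTop (b + j).toNat).mono fun n hn => by
        push_cast
        omega
  have h₂ : XAdicTendsto G atTop
      (qPochhammerInf (q ^ (3 + s)) (q ^ 5) * qPochhammerInf (q ^ (2 - s)) (q ^ 5)) :=
    ((xadicTendsto_qPochhammer _ h5).mul (xadicTendsto_qPochhammer _ h5)).congr'
      (Eventually.of_forall fun n => (jacobi_rrTheta_q hs n).symm)
  exact h₁.eq h₂

theorem qPochhammerInf_q_eq_prod :
    qPochhammerInf q q = ∏ r ∈ range 5, qPochhammerInf (q ^ (r + 1)) (q ^ 5) := by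
  have h5 := constantCoeff_q_pow (m := 5) (by norm_num)
  refine ((xadicTendsto_qPochhammer q constantCoeff_q).comp tendsto_five_mul_atTop).eq ?_
  exact (XAdicTendsto.finset_prod _ fun r _ => xadicTendsto_qPochhammer _ h5).congr'
    (Eventually.of_forall fun M => (qPochhammer_mul q 5 M).symm)

lemma qPochhammerInf_q_eq_mul (hs : s ≤ 1) :
    qPochhammerInf q q =
      qPochhammerInf (q ^ (3 + s)) (q ^ 5) * qPochhammerInf (q ^ (2 - s)) (q ^ 5) *
        (qPochhammerInf (q ^ (1 + s)) (q ^ 5) * qPochhammerInf (q ^ (4 - s)) (q ^ 5)) *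
          qPochhammerInf (q ^ 5) (q ^ 5) := by
  rw [qPochhammerInf_q_eq_prod]
  simp only [prod_range_succ, prod_range_zero, one_mul]
  rcases (by omega : s = 0 ∨ s = 1) with rfl | rfl <;> ring_nf

def rrFactor (s n : ℕ) : ℚ⟦X⟧ :=
  if (n + 1) % 5 = s + 1 ∨ (n + 1) % 5 = 4 - s then (1 - q ^ (n + 1))⁻¹ else 1

lemma xadicTendsto_rrFactor (s : ℕ) : XAdicTendsto (rrFactor s) cofinite 1 := by
  have h := (xadicTendsto_one_sub_mul_pow q constantCoeff_q).ringInverse isUnit_one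
  rw [Ring.inverse_one] at h
  refine fun N => (h N).mono fun n hn => ?_
  rw [rrFactor]
  split_ifs
  · rwa [inv_eq_ringInverse, pow_succ']
  · rfl

lemma prod_range_five_rrFactor (hs : s ≤ 1) (i : ℕ) :
    ∏ r ∈ range 5, rrFactor s (5 * i + r) =
      (1 - q ^ (1 + s) * (q ^ 5) ^ i)⁻¹ʳ * (1 - q ^ (4 - s) * (q ^ 5) ^ i)⁻¹ʳ := by
  have e : ∀ r, q ^ r * (q ^ 5) ^ i = q ^ (5 * i + r) := fun r => by
    rw [← pow_mul, ← pow_add, add_comm, mul_comm]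
  simp only [prod_range_succ, prod_range_zero, one_mul, rrFactor, e, inv_eq_ringInverse]
  rcases (by omega : s = 0 ∨ s = 1) with rfl | rfl
  · rw [if_pos (by omega), if_neg (by omega), if_neg (by omega), if_pos (by omega),
      if_neg (by omega)]
    ring_nf
  · rw [if_neg (by omega), if_pos (by omega), if_pos (by omega), if_neg (by omega),
      if_neg (by omega)]
    ring_nf

theorem tprod_rrFactor (hs : s ≤ 1) :
    ∏' n, rrFactor s n =
      (qPochhammerInf (q ^ (1 + s)) (q ^ 5) * qPochhammerInf (q ^ (4 - s)) (q ^ 5))⁻¹ʳ := by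
  have h5 := constantCoeff_q_pow (m := 5) (by norm_num)
  have hpartial : ∀ M, ∏ n ∈ range (5 * M), rrFactor s n =
      (qPochhammer (q ^ (1 + s)) (q ^ 5) M * qPochhammer (q ^ (4 - s)) (q ^ 5) M)⁻¹ʳ := by
    intro M
    rw [prod_range_mul_eq_prod_prod, prod_congr rfl fun i _ => prod_range_five_rrFactor hs i,
      ← MonoidWithZero.inverse_apply, map_mul, qPochhammer, qPochhammer, map_prod, map_prod,
      ← prod_mul_distrib]
    rfl
  refine ((xadicTendsto_tprod (xadicTendsto_rrFactor s)).comp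
    (tendsto_finset_range.comp tendsto_five_mul_atTop)).eq ?_
  refine XAdicTendsto.congr' ?_ (Eventually.of_forall fun M => (hpartial M).symm)
  exact ((xadicTendsto_qPochhammer _ h5).mul (xadicTendsto_qPochhammer _ h5)).ringInverse
    ((isUnit_qPochhammerInf (constantCoeff_q_pow (by omega)) h5).mul
      (isUnit_qPochhammerInf (constantCoeff_q_pow (by omega)) h5))

end RogersRamanujan

/-- For `s = 0, 1`:
`∑_{n ≥ 0} q^(n² + s n)/(q;q)_n = ∏_{n ≥ 1, n ≡ ±(s+1) mod 5} 1/(1 - q^n)`. -/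
theorem rogers_ramanujan (s : ℕ) (hs : s ≤ 1) :
    (∑' n : ℕ, q ^ (n ^ 2 + s * n) * (poch n)⁻¹) =
      ∏' n : ℕ,
        (if (n + 1) % 5 = s + 1 ∨ (n + 1) % 5 = 4 - s then (1 - q ^ (n + 1))⁻¹ else 1) := by
  change _ = ∏' n, rrFactor s n
  have h5 := constantCoeff_q_pow (m := 5) (by norm_num)
  rw [tsum_eq_thetaSeries_mul hs, tprod_rrFactor hs, qPochhammerInf_q_eq_mul hs]
  exact mul_inverse_mul_mul_eq
    ((isUnit_qPochhammerInf (constantCoeff_q_pow (by omega)) h5).mul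
      (isUnit_qPochhammerInf (constantCoeff_q_pow (by omega)) h5))
    (isUnit_qPochhammerInf h5 h5) (thetaSeries_mul_inverse hs)
end
end

section
/- A B-path is a sequence h : ℕ → ℕ with |h_{i+1} − h_i| ≤ 1 for all i, h_{i+1} = h_i only if h_i = 0, and h eventually identically 0. Let A^k_b(a) be the set of B-paths with h_0 = b, all h_i ≤ k, and exactly a peaks (indices i > 0 with h_{i−1} < h_i > h_{i+1}), with weight wt(h) = sum of peak positions. Then for k > 0 and a ≥ 0, the generating function satisfies A^k_k(a) = q^a · A^k_{k−1}(a), i.e. Σ_{h ∈ A^k_k(a)} q^{wt(h)} = q^a Σ_{h ∈ A^k_{k−1}(a)} q^{wt(h)}. -/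
/-!
B-paths and the lemma `A^k_k(a) = q^a · A^k_{k−1}(a)` for the generating functions
(by weight) of B-paths with prescribed start height, height bound `k`, and number
of peaks `a`.
-/

/-- `h : ℕ → ℕ` is a B-path: successive heights differ by at most 1, equal successive
heights occur only at height 0, and `h` is eventually 0. -/
def IsBPath (h : ℕ → ℕ) : Prop :=
  (∀ i, h (i + 1) ≤ h i + 1 ∧ h i ≤ h (i + 1) + 1) ∧
  (∀ i, h (i + 1) = h i → h i = 0) ∧
  (∃ L, ∀ i, L ≤ i → h i = 0)

/-- `i` is a peak of `h` -/
def IsPeak (h : ℕ → ℕ) (i : ℕ) : Prop := 0 < i ∧ h (i - 1) < h i ∧ h (i + 1) < h i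

/-- the number of peaks of `h` -/
noncomputable def np (h : ℕ → ℕ) : ℕ := Set.ncard {i | IsPeak h i}

/-- the weight of `h`: the sum of the positions of its peaks -/
noncomputable def wt (h : ℕ → ℕ) : ℕ := ∑ᶠ i ∈ {i | IsPeak h i}, i

/-- membership of a B-path in `A^k_b` : start height `b`, all heights `≤ k` -/
def memA (k b : ℕ) (h : ℕ → ℕ) : Prop := IsBPath h ∧ h 0 = b ∧ ∀ i, h i ≤ k

/-- the generating function `A^k_b(a) = Σ_{h ∈ A^k_b, np h = a} q^{wt h}`:
its coefficient of `q^N` is the number of such paths of weight `N`. -/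
noncomputable def AGF (k b a : ℕ) : PowerSeries ℚ :=
  PowerSeries.mk fun N =>
    (Nat.card {h : ℕ → ℕ // memA k b h ∧ np h = a ∧ wt h = N} : ℚ)

namespace BPathAux

/-- shift a path left by one step -/
def shift (h : ℕ → ℕ) : ℕ → ℕ := fun i => h (i + 1)

/-- prepend a value to a path -/
def cons (k : ℕ) (g : ℕ → ℕ) : ℕ → ℕ := fun i => match i with
  | 0 => k
  | j + 1 => g j

@[simp] lemma shift_cons (k : ℕ) (g : ℕ → ℕ) : shift (cons k g) = g := rfl

lemma cons_shift (h : ℕ → ℕ) (hk : h 0 = k) : cons k (shift h) = h := by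
  funext i; cases i <;> simp [cons, shift, hk.symm]

/-- the peak set is finite -/
lemma peaks_finite (h : ℕ → ℕ) (hb : IsBPath h) : {i | IsPeak h i}.Finite := by
  obtain ⟨L, hL⟩ := hb.2.2
  apply Set.Finite.subset (Set.finite_Iio L)
  intro i hi
  simp only [Set.mem_Iio]
  by_contra hc
  push_neg at hc
  have := hL i hc
  have := hi.2.2
  omega

lemma peak_shift_iff (h : ℕ → ℕ) (h10 : h 1 < h 0) (j : ℕ) :
    IsPeak (shift h) j ↔ IsPeak h (j + 1) := by
  cases j with
  | zero =>
      constructor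
      · rintro ⟨h0, -, -⟩; exact absurd h0 (lt_irrefl 0)
      · rintro ⟨-, h1, -⟩; exact absurd (show h 0 < h 1 from h1) (by omega)
  | succ n =>
      simp only [IsPeak, shift, Nat.succ_sub_one, Nat.add_sub_cancel]
      constructor
      · rintro ⟨_, h1, h2⟩; exact ⟨Nat.succ_pos _, h1, h2⟩
      · rintro ⟨_, h1, h2⟩; exact ⟨Nat.succ_pos _, h1, h2⟩

lemma peaks_shift_eq (h : ℕ → ℕ) (h10 : h 1 < h 0) :
    {i | IsPeak h i} = (fun j => j + 1) '' {j | IsPeak (shift h) j} := by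
  ext i
  simp only [Set.mem_setOf_eq, Set.mem_image]
  constructor
  · intro hi
    have h2 : 2 ≤ i := by
      rcases hi with ⟨hpos, h1, _⟩
      rcases Nat.lt_or_ge i 2 with hlt | hge
      · interval_cases i
        exact absurd (show h 0 < h 1 from h1) (by omega)
      · exact hge
    exact ⟨i - 1, (peak_shift_iff h h10 (i - 1)).2 (by rwa [Nat.sub_add_cancel (by omega)]),
      by omega⟩
  · rintro ⟨j, hj, rfl⟩
    exact (peak_shift_iff h h10 j).1 hj

lemma np_shift (h : ℕ → ℕ) (h10 : h 1 < h 0) : np (shift h) = np h := by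
  rw [np, np, peaks_shift_eq h h10,
    Set.ncard_image_of_injective _ (add_left_injective 1)]

lemma finsum_succ (s : Set ℕ) (hfin : s.Finite) :
    ∑ᶠ j ∈ s, (j + 1) = (∑ᶠ j ∈ s, j) + s.ncard := by
  rw [← Set.Finite.coe_toFinset hfin, finsum_mem_coe_finset, finsum_mem_coe_finset,
    Set.ncard_coe_finset, Finset.sum_add_distrib, Finset.sum_const, smul_eq_mul, mul_one]

lemma wt_shift (h : ℕ → ℕ) (hb : IsBPath h) (h10 : h 1 < h 0) :
    wt h = wt (shift h) + np (shift h) := by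
  have hfin : {j | IsPeak (shift h) j}.Finite := by
    have := peaks_finite h hb
    rw [peaks_shift_eq h h10] at this
    exact (Set.Finite.of_finite_image this ((add_left_injective 1).injOn))
  rw [wt, peaks_shift_eq h h10,
    finsum_mem_image ((add_left_injective 1).injOn), wt, np,
    finsum_succ _ hfin]

lemma h1_eq (k : ℕ) (hk : 0 < k) (h : ℕ → ℕ) (hm : memA k k h) : h 1 = k - 1 := by
  obtain ⟨⟨hstep, heq, _⟩, h0, hle⟩ := hm
  have s0 : h 1 ≤ h 0 + 1 ∧ h 0 ≤ h 1 + 1 := hstep 0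
  have e0 : h 1 = h 0 → h 0 = 0 := heq 0
  have := hle 1
  rcases eq_or_ne (h 1) (h 0) with he | he
  · have := e0 he; omega
  · omega

lemma memA_shift (k : ℕ) (hk : 0 < k) (h : ℕ → ℕ) (hm : memA k k h) :
    memA k (k - 1) (shift h) := by
  obtain ⟨⟨hstep, heq, L, hL⟩, h0, hle⟩ := hm
  exact ⟨⟨fun i => hstep (i + 1), fun i => heq (i + 1),
    ⟨L, fun i hi => hL (i + 1) (by omega)⟩⟩,
    h1_eq k hk h ⟨⟨hstep, heq, L, hL⟩, h0, hle⟩, fun i => hle (i + 1)⟩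

lemma memA_cons (k : ℕ) (hk : 0 < k) (g : ℕ → ℕ) (hm : memA k (k - 1) g) :
    memA k k (cons k g) := by
  obtain ⟨⟨hstep, heq, L, hL⟩, g0, hle⟩ := hm
  refine ⟨⟨fun i => ?_, fun i => ?_, ⟨L + 1, fun i hi => ?_⟩⟩, rfl, fun i => ?_⟩
  · cases i with
    | zero => exact ⟨by show g 0 ≤ k + 1; omega, by show k ≤ g 0 + 1; omega⟩
    | succ n => exact hstep n
  · cases i with
    | zero => intro he; exact absurd (show g 0 = k from he) (by omega)
    | succ n => exact heq n
  · cases i with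
    | zero => omega
    | succ n => exact hL n (by omega)
  · cases i with
    | zero => exact le_refl k
    | succ n => exact hle n

/-- key: wt of a path starting at max height is at least np -/
lemma np_le_wt (h : ℕ → ℕ) (hb : IsBPath h) : np h ≤ wt h := by
  have hfin := peaks_finite h hb
  rw [np, wt, ← Set.Finite.coe_toFinset hfin, finsum_mem_coe_finset, Set.ncard_coe_finset]
  calc hfin.toFinset.card = hfin.toFinset.card • 1 := by simp
    _ ≤ ∑ i ∈ hfin.toFinset, i := Finset.card_nsmul_le_sum _ _ _
        (fun x hx => by
          have hp : IsPeak h x := by simpa using hx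
          exact hp.1)

end BPathAux

open BPathAux in
theorem AGF_top (k a : ℕ) (hk : 0 < k) :
    AGF k k a = PowerSeries.X ^ a * AGF k (k - 1) a := by
  ext N
  rw [mul_comm, PowerSeries.coeff_mul_X_pow']
  by_cases hN : a ≤ N
  · simp only [hN, if_pos, AGF, PowerSeries.coeff_mk]
    norm_cast
    apply Nat.card_congr
    refine ⟨fun ⟨h, hm, hnp, hwt⟩ => ⟨shift h, memA_shift k hk h hm, ?_, ?_⟩,
      fun ⟨g, hm, hnp, hwt⟩ => ⟨cons k g, memA_cons k hk g hm, ?_, ?_⟩, ?_, ?_⟩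
    · have h10 : h 1 < h 0 := by
        rw [h1_eq k hk h hm, hm.2.1]; omega
      rw [np_shift h h10, hnp]
    · have h10 : h 1 < h 0 := by
        rw [h1_eq k hk h hm, hm.2.1]; omega
      have := wt_shift h hm.1 h10
      rw [np_shift h h10, hnp, hwt] at this
      omega
    · have hc := memA_cons k hk g hm
      have h10 : cons k g 1 < cons k g 0 := by
        show g 0 < k; rw [hm.2.1]; omega
      have := np_shift (cons k g) h10
      rw [shift_cons] at this
      rw [← this, hnp]
    · have hc := memA_cons k hk g hm
      have h10 : cons k g 1 < cons k g 0 := by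
        show g 0 < k; rw [hm.2.1]; omega
      have h2 := wt_shift (cons k g) hc.1 h10
      have h3 := np_shift (cons k g) h10
      rw [shift_cons] at h2 h3
      rw [h2, hwt, hnp]
      omega
    · rintro ⟨h, hm, hnp, hwt⟩
      simp only [Subtype.mk.injEq]
      exact cons_shift h hm.2.1
    · rintro ⟨g, hm, hnp, hwt⟩
      simp only [Subtype.mk.injEq, shift_cons]
  · simp only [hN, if_neg, not_false_iff, AGF, PowerSeries.coeff_mk]
    norm_cast
    rw [Nat.card_eq_zero]
    left
    constructor
    rintro ⟨h, hm, hnp, hwt⟩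
    have := np_le_wt h hm.1
    omega
end

section
/- With decorated B-paths (h, h°) where h ∈ A^k_b and h° : ℕ → ℕ is finitely supported, number of peaks np(h,h°) = np(h) + Σ_i h°_i and weight wt(h,h°) = wt(h) + Σ_i i·h°_i, the generating function of decorated paths with a peaks satisfies: Ã^k_b(a) = Σ_{n=0}^a (1/(q;q)_{a−n}) · A^k_b(n), as formal power series in q. -/
/-- the generating function `Ã^k_b(a)` of decorated B-paths `(h, h°)` with
`np h + Σ_i h°_i = a` peaks and deaks, weighted by `wt h + Σ_i i·h°_i` -/
noncomputable def tAGF (k b a : ℕ) : PowerSeries ℚ :=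
  PowerSeries.mk fun N =>
    (Nat.card {p : (ℕ → ℕ) × (ℕ →₀ ℕ) // memA k b p.1 ∧
        np p.1 + (p.2.sum fun _ m => m) = a ∧
        wt p.1 + (p.2.sum fun i m => i * m) = N} : ℚ)

open PowerSeries Finset.HasAntidiagonal

noncomputable def weightGF {α : Type*} (w : α → ℕ) : PowerSeries ℚ :=
  PowerSeries.mk fun N => (Nat.card {x // w x = N} : ℚ)

section weightGF

variable {α β : Type*}

@[simp]
lemma coeff_weightGF (w : α → ℕ) (N : ℕ) :
    coeff N (weightGF w) = Nat.card {x // w x = N} :=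
  coeff_mk _ _

lemma weightGF_congr {wα : α → ℕ} {wβ : β → ℕ} (e : α ≃ β) (he : ∀ x, wβ (e x) = wα x) :
    weightGF wα = weightGF wβ := by
  ext N
  simp only [coeff_weightGF]
  exact congrArg _ (Nat.card_congr (e.subtypeEquiv fun x => by rw [he]))

lemma weightGF_add_const (w : α → ℕ) (c : ℕ) :
    weightGF (fun x => w x + c) = X ^ c * weightGF w := by
  ext N
  rw [coeff_X_pow_mul', coeff_weightGF]
  split_ifs with hc
  · rw [coeff_weightGF]
    exact congrArg _ (Nat.card_congr (Equiv.subtypeEquivRight fun x => by omega))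
  · have : IsEmpty {x // w x + c = N} := ⟨fun x => hc (by omega)⟩
    simp

lemma finite_add_const_eq {w : α → ℕ} (hw : ∀ N, Finite {x // w x = N}) (c N : ℕ) :
    Finite {x // w x + c = N} :=
  have := hw (N - c)
  .of_injective (β := {x // w x = N - c}) (fun x => ⟨x.1, by have := x.2; omega⟩)
    fun _ _ h => Subtype.ext (congrArg Subtype.val h :)

lemma weightGF_sumElim {wα : α → ℕ} {wβ : β → ℕ} (hα : ∀ N, Finite {x // wα x = N})
    (hβ : ∀ N, Finite {x // wβ x = N}) :
    weightGF (Sum.elim wα wβ) = weightGF wα + weightGF wβ := by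
  ext N
  have : Finite {x // Sum.elim wα wβ (Sum.inl x) = N} := hα N
  have : Finite {y // Sum.elim wα wβ (Sum.inr y) = N} := hβ N
  simp only [coeff_weightGF, map_add]
  rw [Nat.card_congr Equiv.subtypeSum, Nat.card_sum, Nat.cast_add]
  rfl

def weightFiberProdEquiv (wα : α → ℕ) (wβ : β → ℕ) (N : ℕ) :
    {p : α × β // wα p.1 + wβ p.2 = N} ≃
      Σ ij : antidiagonal N, {x // wα x = ij.1.1} × {y // wβ y = ij.1.2} where
  toFun p := ⟨⟨(wα p.1.1, wβ p.1.2), mem_antidiagonal.2 p.2⟩, ⟨p.1.1, rfl⟩, ⟨p.1.2, rfl⟩⟩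
  invFun q := ⟨(q.2.1, q.2.2), by
    rw [q.2.1.2, q.2.2.2]; exact mem_antidiagonal.1 q.1.2⟩
  left_inv _ := rfl
  right_inv := by
    rintro ⟨⟨⟨i, j⟩, hij⟩, ⟨x, hx⟩, ⟨y, hy⟩⟩
    dsimp only at hx hy
    subst hx hy
    rfl

lemma finite_weight_prod_eq {wα : α → ℕ} {wβ : β → ℕ} (hα : ∀ N, Finite {x // wα x = N})
    (hβ : ∀ N, Finite {x // wβ x = N}) (N : ℕ) :
    Finite {p : α × β // wα p.1 + wβ p.2 = N} :=
  .of_equiv _ (weightFiberProdEquiv wα wβ N).symm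

lemma weightGF_prod {wα : α → ℕ} {wβ : β → ℕ} (hα : ∀ N, Finite {x // wα x = N})
    (hβ : ∀ N, Finite {x // wβ x = N}) :
    weightGF (fun p : α × β => wα p.1 + wβ p.2) = weightGF wα * weightGF wβ := by
  ext N
  rw [coeff_mul, coeff_weightGF, Nat.card_congr (weightFiberProdEquiv wα wβ N), Nat.card_sigma,
    ← Finset.sum_coe_sort (antidiagonal N)]
  push_cast [Nat.card_prod, coeff_weightGF]
  rfl

lemma weightGF_sigma {ι : Type*} [Fintype ι] {γ : ι → Type*} (w : ∀ i, γ i → ℕ)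
    (hw : ∀ i N, Finite {x // w i x = N}) :
    weightGF (fun x : Σ i, γ i => w x.1 x.2) = ∑ i, weightGF (w i) := by
  ext N
  let e : {x : Σ i, γ i // w x.1 x.2 = N} ≃ Σ i, {x // w i x = N} :=
    ⟨fun x => ⟨x.1.1, x.1.2, x.2⟩, fun y => ⟨⟨y.1, y.2.1⟩, y.2.2⟩, fun _ => rfl, fun _ => rfl⟩
  rw [map_sum, coeff_weightGF, Nat.card_congr e, Nat.card_sigma]
  push_cast [coeff_weightGF]
  rfl

end weightGF

lemma finite_setOf_le_and_eq_zero (k L : ℕ) :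
    {h : ℕ → ℕ | (∀ i, h i ≤ k) ∧ ∀ i, L ≤ i → h i = 0}.Finite := by
  refine (Set.finite_range fun g : Fin L → Fin (k + 1) =>
    fun i => if hi : i < L then (g ⟨i, hi⟩ : ℕ) else 0).subset ?_
  rintro h ⟨hk, hL⟩
  refine ⟨fun i => ⟨h i, Nat.lt_succ_of_le (hk i)⟩, funext fun i => ?_⟩
  dsimp only
  split_ifs with hi
  · rfl
  · exact (hL i (not_lt.1 hi)).symm

/-- `f i` is the multiplicity of the part `i`, so `{f // f.degree = m}` encodes the partitions into
at most `m` parts (padded with zero parts), and `partWeight f` is the number they partition. -/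
def partWeight (f : ℕ →₀ ℕ) : ℕ := f.sum fun i m => i * m

lemma partWeight_add (f g : ℕ →₀ ℕ) : partWeight (f + g) = partWeight f + partWeight g :=
  Finsupp.sum_add_index' (fun _ => mul_zero _) fun _ => mul_add _

lemma partWeight_single_zero (m : ℕ) : partWeight (Finsupp.single 0 m) = 0 := by
  simp [partWeight]

lemma partWeight_mapDomain_succ (f : ℕ →₀ ℕ) :
    partWeight (f.mapDomain Nat.succ) = partWeight f + f.degree := by
  rw [partWeight, Finsupp.sum_mapDomain_index_inj Nat.succ_injective]
  exact (Finsupp.sum_congr fun i _ => Nat.succ_mul i (f i)).trans Finsupp.sum_add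

lemma mul_apply_le_partWeight (f : ℕ →₀ ℕ) (i : ℕ) : i * f i ≤ partWeight f := by
  by_cases hi : i ∈ f.support
  · exact Finset.single_le_sum (f := fun i => i * f i) (fun _ _ => Nat.zero_le _) hi
  · simp [Finsupp.notMem_support_iff.mp hi]

lemma finite_partWeight_eq (m j : ℕ) :
    Finite {f : {f : ℕ →₀ ℕ // f.degree = m} // partWeight f = j} := by
  have hfin := (finite_setOf_le_and_eq_zero m (j + 1)).preimage
    (DFunLike.coe_injective.injOn (f := fun f : ℕ →₀ ℕ => (f : ℕ → ℕ)))
  refine Finite.of_injective (β := hfin.toFinset) (fun f => ⟨f.1.1, ?_⟩) ?_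
  · refine hfin.mem_toFinset.2 ?_
    show (∀ i, f.1.1 i ≤ m) ∧ ∀ i, j + 1 ≤ i → f.1.1 i = 0
    refine ⟨fun i => (Finsupp.le_degree i f.1.1).trans_eq f.1.2, fun i hi => ?_⟩
    by_contra h0
    have := mul_apply_le_partWeight f.1.1 i
    have := Nat.le_mul_of_pos_right i (Nat.pos_of_ne_zero h0)
    have := f.2
    omega
  · intro f g hfg
    exact Subtype.ext (Subtype.ext (congrArg Subtype.val hfg :))

noncomputable def partitionGF (m : ℕ) : PowerSeries ℚ :=
  weightGF fun f : {f : ℕ →₀ ℕ // f.degree = m} => partWeight f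

lemma partitionGF_zero : partitionGF 0 = 1 := by
  ext N
  rw [partitionGF, coeff_weightGF, coeff_one]
  have h0 (f : {f : ℕ →₀ ℕ // f.degree = 0}) : f.1 = 0 := (Finsupp.degree_eq_zero_iff _).1 f.2
  split_ifs with hN
  · subst hN
    have : Unique {f : {f : ℕ →₀ ℕ // f.degree = 0} // partWeight f = 0} :=
      { default := ⟨⟨0, rfl⟩, rfl⟩, uniq := fun f => Subtype.ext (Subtype.ext (h0 f.1)) }
    simp
  · have : IsEmpty {f : {f : ℕ →₀ ℕ // f.degree = 0} // partWeight f = N} :=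
      ⟨fun f => hN (by rw [← f.2, h0 f.1]; rfl)⟩
    simp

noncomputable def addZeroPartOrShift (m : ℕ) :
    {f : ℕ →₀ ℕ // f.degree = m} ⊕ {f : ℕ →₀ ℕ // f.degree = m + 1} →
      {f : ℕ →₀ ℕ // f.degree = m + 1} :=
  Sum.elim (fun f => ⟨f.1 + Finsupp.single 0 1, by simp [f.2]⟩)
    (fun f => ⟨f.1.mapDomain Nat.succ, by simp [f.2]⟩)

lemma addZeroPartOrShift_injective (m : ℕ) : Function.Injective (addZeroPartOrShift m) := by
  have hshift (f : ℕ →₀ ℕ) : f.mapDomain Nat.succ 0 = 0 :=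
    Finsupp.mapDomain_of_notMem_range _ _ fun ⟨i, hi⟩ => Nat.succ_ne_zero i hi
  rintro (f | f) (g | g) h <;> have h := Subtype.ext_iff.1 h <;>
    simp only [addZeroPartOrShift, Sum.elim_inl, Sum.elim_inr] at h
  · exact congrArg Sum.inl (Subtype.ext (add_right_cancel h))
  · simpa [hshift] using DFunLike.congr_fun h 0
  · simpa [hshift] using DFunLike.congr_fun h 0
  · exact congrArg Sum.inr (Subtype.ext (Finsupp.mapDomain_injective Nat.succ_injective h))

lemma addZeroPartOrShift_surjective (m : ℕ) : Function.Surjective (addZeroPartOrShift m) := by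
  rintro ⟨F, hF⟩
  by_cases h0 : F 0 = 0
  · have hrange : ↑F.support ⊆ Set.range Nat.succ := fun i hi =>
      (Nat.exists_eq_succ_of_ne_zero (ne_of_mem_of_not_mem hi (by simpa using h0))).imp
        fun _ => Eq.symm
    have hF' := Finsupp.mapDomain_comapDomain _ Nat.succ_injective F hrange
    refine ⟨Sum.inr ⟨F.comapDomain Nat.succ Nat.succ_injective.injOn, ?_⟩, Subtype.ext hF'⟩
    rw [← Finsupp.degree_mapDomain Nat.succ, hF', hF]
  · have hF' := Finsupp.sub_add_single_one_cancel h0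
    refine ⟨Sum.inl ⟨F - Finsupp.single 0 1, ?_⟩, Subtype.ext hF'⟩
    have := congrArg Finsupp.degree hF'
    rw [map_add, Finsupp.degree_single, hF] at this
    omega

noncomputable def addZeroPartOrShiftEquiv (m : ℕ) :
    {f : ℕ →₀ ℕ // f.degree = m} ⊕ {f : ℕ →₀ ℕ // f.degree = m + 1} ≃
      {f : ℕ →₀ ℕ // f.degree = m + 1} :=
  .ofBijective _ ⟨addZeroPartOrShift_injective m, addZeroPartOrShift_surjective m⟩

lemma partitionGF_succ (m : ℕ) :
    partitionGF (m + 1) = partitionGF m + X ^ (m + 1) * partitionGF (m + 1) := by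
  rw [partitionGF, partitionGF, ← weightGF_add_const, ← weightGF_sumElim (finite_partWeight_eq m)]
  · refine (weightGF_congr (addZeroPartOrShiftEquiv m) ?_).symm
    rintro (f | f)
    · show partWeight (f.1 + Finsupp.single 0 1) = partWeight f.1
      rw [partWeight_add, partWeight_single_zero, add_zero]
    · show partWeight (f.1.mapDomain Nat.succ) = partWeight f.1 + (m + 1)
      rw [partWeight_mapDomain_succ, f.2]
  · exact finite_add_const_eq (finite_partWeight_eq (m + 1)) (m + 1)

lemma poch_mul_partitionGF (m : ℕ) : poch m * partitionGF m = 1 := by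
  induction m with
  | zero => simp [poch, partitionGF_zero]
  | succ m ih =>
    rw [poch, Finset.prod_range_succ, ← poch, q]
    linear_combination ih + poch m * partitionGF_succ m

lemma inv_poch_eq_partitionGF (m : ℕ) : (poch m)⁻¹ = partitionGF m := by
  have h := poch_mul_partitionGF m
  refine ((PowerSeries.eq_inv_iff_mul_eq_one ?_).2 (by rwa [mul_comm])).symm
  exact left_ne_zero_of_mul_eq_one (by rw [← map_mul, h, map_one])

namespace IsBPath

variable {h : ℕ → ℕ}

lemma finite_setOf_isPeak (hP : IsBPath h) : {i | IsPeak h i}.Finite := by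
  obtain ⟨L, hL⟩ := hP.2.2
  refine (Set.finite_Iio L).subset fun i ⟨_, _, hpeak⟩ => ?_
  by_contra hiL
  have := hL i (not_lt.1 hiL)
  omega

lemma le_wt_of_isPeak (hP : IsBPath h) {i : ℕ} (hi : IsPeak h i) : i ≤ wt h := by
  have hfin := hP.finite_setOf_isPeak
  rw [wt, ← hfin.coe_toFinset, finsum_mem_coe_finset]
  exact Finset.single_le_sum (f := id) (fun _ _ => Nat.zero_le _) (hfin.mem_toFinset.2 hi)

lemma exists_isPeak_of_lt (hP : IsBPath h) {i : ℕ} (hi : h i < h (i + 1)) :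
    ∃ j, i < j ∧ IsPeak h j := by
  have hdescent : ∃ t, i < t ∧ h (t + 1) ≤ h t := by
    by_contra! hasc
    have hpos (s : ℕ) : 0 < h (i + 1 + s) := by
      induction s with
      | zero => exact Nat.zero_lt_of_lt hi
      | succ s ih => exact ih.trans (hasc _ (by omega))
    obtain ⟨L, hL⟩ := hP.2.2
    have := hpos L
    rw [hL _ (by omega)] at this
    omega
  classical
  obtain ⟨hij, hdesc⟩ := Nat.find_spec hdescent
  set j := Nat.find hdescent
  have hprev : h (j - 1) < h j := by
    rcases (show j = i + 1 ∨ i < j - 1 by omega) with hj | hlt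
    · rwa [hj, Nat.add_sub_cancel]
    · have := not_and.1 (Nat.find_min hdescent (show j - 1 < j by omega)) hlt
      rwa [Nat.sub_add_cancel (by omega), not_le] at this
  refine ⟨j, hij, by omega, hprev, hdesc.lt_of_ne fun heq => ?_⟩
  have := hP.2.1 j heq
  omega

lemma le_sub_one_of_wt_le (hP : IsBPath h) {N i : ℕ} (hw : wt h ≤ N) (hi : N ≤ i) :
    h (i + 1) ≤ h i - 1 := by
  have hle : h (i + 1) ≤ h i := not_lt.1 fun hlt => by
    obtain ⟨j, hij, hj⟩ := hP.exists_isPeak_of_lt hlt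
    have := hP.le_wt_of_isPeak hj
    omega
  rcases hle.lt_or_eq with hlt | heq
  · omega
  · have := hP.2.1 i heq
    omega

lemma eq_zero_of_wt_le (hP : IsBPath h) {k N i : ℕ} (hk : ∀ i, h i ≤ k) (hw : wt h ≤ N)
    (hi : N + k ≤ i) : h i = 0 := by
  have hdecay (t : ℕ) : h (N + t) ≤ h N - t := by
    induction t with
    | zero => simp
    | succ t ih =>
      rw [← Nat.add_assoc]
      have := hP.le_sub_one_of_wt_le hw (Nat.le_add_right N t)
      omega
  have := hdecay (i - N)
  have := hk N
  rw [Nat.add_sub_cancel' (by omega)] at *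
  omega

end IsBPath

lemma finite_wt_eq (k b n w : ℕ) :
    Finite {h : {h : ℕ → ℕ // memA k b h ∧ np h = n} // wt h.1 = w} := by
  have := (finite_setOf_le_and_eq_zero k (w + k)).to_subtype
  refine Finite.of_injective (β := {h : ℕ → ℕ | (∀ i, h i ≤ k) ∧ ∀ i, w + k ≤ i → h i = 0})
    (fun h => ⟨h.1.1, h.1.2.1.2.2, fun i =>
      h.1.2.1.1.eq_zero_of_wt_le h.1.2.1.2.2 h.2.le⟩) fun f g hfg => ?_
  exact Subtype.ext (Subtype.ext (congrArg Subtype.val hfg :))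

lemma AGF_eq_weightGF (k b n : ℕ) :
    AGF k b n = weightGF fun h : {h : ℕ → ℕ // memA k b h ∧ np h = n} => wt h.1 := by
  ext N
  rw [AGF, coeff_mk, coeff_weightGF]
  exact congrArg _ (Nat.card_congr ((Equiv.subtypeEquivRight fun _ => and_assoc.symm).trans
    (Equiv.subtypeSubtypeEquivSubtypeInter _ _).symm))

lemma tAGF_eq_weightGF (k b a : ℕ) :
    tAGF k b a = weightGF fun p : {p : (ℕ → ℕ) × (ℕ →₀ ℕ) // memA k b p.1 ∧
      np p.1 + p.2.degree = a} => wt p.1.1 + partWeight p.1.2 := by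
  ext N
  rw [tAGF, coeff_mk, coeff_weightGF]
  exact congrArg _ (Nat.card_congr ((Equiv.subtypeEquivRight fun _ => and_assoc.symm).trans
    (Equiv.subtypeSubtypeEquivSubtypeInter _ _).symm))

noncomputable def decoratedEquiv (k b a : ℕ) :
    {p : (ℕ → ℕ) × (ℕ →₀ ℕ) // memA k b p.1 ∧ np p.1 + p.2.degree = a} ≃
      Σ n : Fin (a + 1), {f : ℕ →₀ ℕ // f.degree = a - n} × {h // memA k b h ∧ np h = n} where
  toFun p := ⟨⟨np p.1.1, by omega⟩, ⟨p.1.2, by dsimp only; omega⟩, ⟨p.1.1, p.2.1, rfl⟩⟩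
  invFun x := ⟨(x.2.2.1, x.2.1.1), x.2.2.2.1, by
    have := x.1.2; have := x.2.1.2; have := x.2.2.2.2; dsimp only; omega⟩
  left_inv _ := rfl
  right_inv := by
    rintro ⟨⟨n, hn⟩, f, ⟨h, hm, hnp⟩⟩
    dsimp only at hnp
    subst hnp
    rfl

theorem tAGF_eq_sum_AGF_general (k b a : ℕ) :
    tAGF k b a = ∑ n ∈ Finset.range (a + 1), (poch (a - n))⁻¹ * AGF k b n := by
  have hfin (n : Fin (a + 1)) := finite_weight_prod_eq (finite_partWeight_eq (a - n))
    (finite_wt_eq k b n)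
  rw [tAGF_eq_weightGF, weightGF_congr (decoratedEquiv k b a)
      (wα := fun p => wt p.1.1 + partWeight p.1.2)
      (wβ := fun x => partWeight x.2.1.1 + wt x.2.2.1) fun _ => add_comm _ _,
    weightGF_sigma _ hfin, ← Fin.sum_univ_eq_sum_range fun n => (poch (a - n))⁻¹ * AGF k b n]
  refine Finset.sum_congr rfl fun n _ => ?_
  rw [weightGF_prod (finite_partWeight_eq _) (finite_wt_eq k b n), inv_poch_eq_partitionGF,
    AGF_eq_weightGF]
  rfl

theorem tAGF_eq_sum_AGF (k b a : ℕ) (hb : b ≤ k) :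
    tAGF k b a = ∑ n ∈ Finset.range (a + 1), (poch (a - n))⁻¹ * AGF k b n :=
  tAGF_eq_sum_AGF_general k b a
end
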